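/- arXiv:2307.12621 — 9 statements merged into one kernel-verified Lean document; each statement's English description precedes it below -/
import Mathlib

section
/- Let F_q be a finite field of characteristic p, let d > 1 be an integer with gcd(d, q-1) = 1 and p ∤ d, and let a, b ∈ F_q be nonzero. Then the bivariate polynomial z^d - a·x^d - b is irreducible over the algebraic closure of F_q. -/
open MvPolynomial

/-- Eisenstein-criterion core: over an algebraically closed field of char `p`,
`Y^d - C c` is irreducible in `(k[X])[Y]` where `c = C a * X^d + C b`. -/
theorem aux_irred {k : Type*} [Field k] [IsAlgClosed k] {p : ℕ} [CharP k p]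
    (d : ℕ) (hd : 1 < d) (hpd : ¬ p ∣ d) (a b : k) (ha : a ≠ 0) (hb : b ≠ 0) :
    Irreducible (Polynomial.X ^ d -
      Polynomial.C (Polynomial.C a * Polynomial.X ^ d + Polynomial.C b) :
      Polynomial (Polynomial k)) := by
  classical
  have hd0 : d ≠ 0 := by omega
  set g : Polynomial k := Polynomial.X ^ d - Polynomial.C (-(b / a)) with hg
  set c : Polynomial k := Polynomial.C a * Polynomial.X ^ d + Polynomial.C b with hc
  have hcg : c = Polynomial.C a * g := by
    rw [hg, hc]
    have h : a * -(b / a) = -b := by field_simp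
    rw [mul_sub, ← Polynomial.C_mul, h, Polynomial.C_neg]
    ring
  -- g is separable, hence squarefree
  have hsep : g.Separable := Polynomial.separable_X_pow_sub_C' p d (-(b / a)) hpd
    (by simp [hb, ha])
  have hsqf : Squarefree g := hsep.squarefree
  -- g has a root r
  have hgdeg : g.degree = d := Polynomial.degree_X_pow_sub_C (by omega) _
  obtain ⟨r, hr⟩ := IsAlgClosed.exists_root g (by rw [hgdeg]; exact_mod_cast (by omega : d ≠ 0) ∘ (by exact_mod_cast ·))
  set π : Polynomial k := Polynomial.X - Polynomial.C r with hπ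
  have hπg : π ∣ g := Polynomial.dvd_iff_isRoot.mpr hr
  have hπ2g : ¬ (π * π) ∣ g := fun h => Polynomial.not_isUnit_X_sub_C r (hsqf π h)
  have hπc : π ∣ c := hcg ▸ hπg.mul_left _
  have hπ2c : ¬ (π * π) ∣ c := by
    intro h
    apply hπ2g
    have : g = Polynomial.C a⁻¹ * c := by
      rw [hcg, ← mul_assoc, ← Polynomial.C_mul, inv_mul_cancel₀ ha, Polynomial.C_1, one_mul]
    rw [this]
    exact h.mul_left _
  -- the prime ideal
  set 𝓟 : Ideal (Polynomial k) := Ideal.span {π} with h𝓟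
  have hπprime : Prime π := Polynomial.prime_X_sub_C r
  have hprime : 𝓟.IsPrime := (Ideal.span_singleton_prime hπprime.ne_zero).mpr hπprime
  set f : Polynomial (Polynomial k) := Polynomial.X ^ d - Polynomial.C c with hf
  have hmonic : f.Monic := Polynomial.monic_X_pow_sub_C c hd0
  have hndeg : f.natDegree = d := Polynomial.natDegree_X_pow_sub_C
  have heis : f.IsEisensteinAt 𝓟 := by
    refine hmonic.isEisensteinAt_of_mem_of_notMem hprime.ne_top ?_ ?_
    · intro n hn
      rw [hndeg] at hn
      rw [hf, Polynomial.coeff_sub, Polynomial.coeff_X_pow, if_neg (by omega), Polynomial.coeff_C]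
      split_ifs with h
      · simpa using (Ideal.mem_span_singleton).mpr (dvd_neg.mpr hπc)
      · simpa using Ideal.zero_mem 𝓟
    · rw [hf, Polynomial.coeff_sub, Polynomial.coeff_X_pow, if_neg (by omega),
        Polynomial.coeff_C, if_pos rfl, h𝓟, Ideal.span_singleton_pow, Ideal.mem_span_singleton]
      rw [zero_sub, dvd_neg, sq]
      exact hπ2c
  exact heis.irreducible hprime hmonic.isPrimitive (by rw [hndeg]; omega)

theorem stmt4 (F : Type*) [Field F] [Fintype F] (p : ℕ) [CharP F p]
    (d : ℕ) (hd : 1 < d) (hgcd : Nat.gcd d (Fintype.card F - 1) = 1) (hpd : ¬ p ∣ d)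
    (a b : F) (ha : a ≠ 0) (hb : b ≠ 0) :
    Irreducible ((X 0) ^ d - C (algebraMap F (AlgebraicClosure F) a) * (X 1) ^ d
      - C (algebraMap F (AlgebraicClosure F) b) :
      MvPolynomial (Fin 2) (AlgebraicClosure F)) := by
  classical
  set k := AlgebraicClosure F
  haveI : CharP k p := charP_of_injective_algebraMap (algebraMap F k).injective p
  set a' := algebraMap F k a with ha'def
  set b' := algebraMap F k b with hb'def
  have ha' : a' ≠ 0 := fun h => ha ((algebraMap F k).injective (by simp [← ha'def, h]))
  have hb' : b' ≠ 0 := fun h => hb ((algebraMap F k).injective (by simp [← hb'def, h]))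
  -- the algebra equivalence MvPolynomial (Fin 2) k ≃ₐ[k] (k[X])[Y]
  let inner : MvPolynomial (Fin 1) k ≃ₐ[k] Polynomial k :=
    (MvPolynomial.finSuccEquiv k 0).trans
      (Polynomial.mapAlgEquiv (MvPolynomial.isEmptyAlgEquiv k (Fin 0)))
  let e : MvPolynomial (Fin 2) k ≃ₐ[k] Polynomial (Polynomial k) :=
    (MvPolynomial.finSuccEquiv k 1).trans (Polynomial.mapAlgEquiv inner)
  have h0 : e (X 0) = Polynomial.X := by
    simp [e, MvPolynomial.finSuccEquiv_X_zero, Polynomial.mapAlgEquiv]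
  have hmap : ∀ q : Polynomial (MvPolynomial (Fin 1) k),
      Polynomial.mapAlgEquiv (R := k) inner q = q.map inner :=
    fun q => congrFun (Polynomial.coe_mapAlgEquiv inner) q
  have hmap0 : ∀ q : Polynomial (MvPolynomial (Fin 0) k),
      Polynomial.mapAlgEquiv (R := k) (MvPolynomial.isEmptyAlgEquiv k (Fin 0)) q
        = q.map (MvPolynomial.isEmptyAlgEquiv k (Fin 0)) :=
    fun q => congrFun (Polynomial.coe_mapAlgEquiv _) q
  have hinner : inner (X 0) = Polynomial.X := by
    show Polynomial.mapAlgEquiv _ ((MvPolynomial.finSuccEquiv k 0) (X 0)) = Polynomial.X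
    rw [MvPolynomial.finSuccEquiv_X_zero, hmap0, Polynomial.map_X]
  have h1 : e (X 1) = Polynomial.C Polynomial.X := by
    have e1 : (MvPolynomial.finSuccEquiv k 1) (X 1) = Polynomial.C (X 0) := by
      have h10 : (1 : Fin 2) = Fin.succ 0 := rfl
      rw [h10, MvPolynomial.finSuccEquiv_X_succ]
    show Polynomial.mapAlgEquiv inner ((MvPolynomial.finSuccEquiv k 1) (X 1)) = _
    rw [e1, hmap, Polynomial.map_C]
    exact congrArg Polynomial.C hinner
  have hC : ∀ x : k, e (C x) = Polynomial.C (Polynomial.C x) := by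
    intro x
    rw [show (C x : MvPolynomial (Fin 2) k) = algebraMap k _ x from rfl, AlgEquiv.commutes]
    rfl
  rw [← MulEquiv.irreducible_iff e]
  rw [map_sub, map_sub, map_mul, map_pow, map_pow, h0, h1, hC, hC]
  have : (Polynomial.X : Polynomial (Polynomial k)) ^ d
      - Polynomial.C (Polynomial.C a') * Polynomial.C Polynomial.X ^ d
      - Polynomial.C (Polynomial.C b')
      = Polynomial.X ^ d - Polynomial.C (Polynomial.C a' * Polynomial.X ^ d
        + Polynomial.C b') := by
    rw [map_add, map_mul, map_pow]
    ring
  rw [this]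
  exact aux_irred d hd hpd a' b' ha' hb'
end

section
/- Let F_q be a finite field of characteristic p, let d > 1 with gcd(d, q-1) = 1 and p ∤ d, and let c1, c2, c3, c4, c5 ∈ F_q be nonzero. Then the system of equations z^d - c1·x^d = c2 and (z+1)^d - c3·(x+c4)^d = c5 has at most d² solutions (z, x) in the algebraic closure of F_q. -/
open Polynomial Finset

section LinPow
variable {R : Type*} [CommRing R]

lemma linPow (a b : R) (n : ℕ) :
    (C a + C b * X) ^ n =
      ∑ k ∈ range (n+1), C (a ^ (n-k) * b ^ k * (n.choose k : R)) * X ^ k := by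
  rw [add_pow]
  conv_lhs => rw [← Finset.sum_range_reflect]
  refine Finset.sum_congr rfl fun k hk => ?_
  have hk' : k ≤ n := by simpa [Nat.lt_succ_iff] using hk
  have h1 : n + 1 - 1 - k = n - k := by omega
  rw [h1, Nat.sub_sub_self hk', Nat.choose_symm hk']
  rw [mul_pow, ← C_pow, ← C_pow, map_mul, map_mul, map_natCast C]
  ring

lemma linPow_coeff (a b : R) (n m : ℕ) :
    ((C a + C b * X) ^ n).coeff m
      = if m ≤ n then a ^ (n-m) * b ^ m * (n.choose m : R) else 0 := by
  rw [linPow, finset_sum_coeff]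
  simp only [coeff_C_mul, coeff_X_pow, mul_ite, mul_one, mul_zero]
  rw [Finset.sum_ite_eq (range (n+1)) m]
  simp [Nat.lt_succ_iff]

end LinPow


namespace Stmt5Aux

variable {R : Type*} [CommRing R]

/-- index type for the Sylvester-style matrix -/
abbrev Idx (d : ℕ) := Fin d ⊕ Fin d

def eIdx (d : ℕ) : Idx d → ℕ := Sum.elim (fun i => (i : ℕ)) (fun i => d + i)

def shIdx (d : ℕ) : Idx d → ℕ := Sum.elim Fin.val Fin.val

noncomputable def rowPoly (d : ℕ) (p q : R[X]) : Idx d → R[X] :=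
  Sum.elim (fun i => X ^ (i : ℕ) * p) (fun i => X ^ (i : ℕ) * q)

noncomputable def sylv (d : ℕ) (p q : R[X]) : Matrix (Idx d) (Idx d) R :=
  fun r c => (rowPoly d p q r).coeff (eIdx d c)

lemma sylv_map {S : Type*} [CommRing S] (φ : R →+* S) (d : ℕ) (p q : R[X]) :
    (sylv d p q).map φ = sylv d (p.map φ) (q.map φ) := by
  ext r c
  cases r with
  | inl i => simp [sylv, rowPoly, Matrix.map_apply, ← coeff_map, Polynomial.map_mul,
      Polynomial.map_pow]
  | inr i => simp [sylv, rowPoly, Matrix.map_apply, ← coeff_map, Polynomial.map_mul,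
      Polynomial.map_pow]

lemma sum_eIdx {M : Type*} [AddCommMonoid M] (d : ℕ) (f : ℕ → M) :
    ∑ c : Idx d, f (eIdx d c) = ∑ k ∈ range (2 * d), f k := by
  have h : ∀ m : ℕ, ∑ k ∈ range (d + m), f k
      = ∑ k ∈ range d, f k + ∑ k ∈ range m, f (d + k) := by
    intro m
    induction m with
    | zero => simp
    | succ m ih => rw [← Nat.add_assoc, Finset.sum_range_succ, ih, Finset.sum_range_succ, add_assoc]
  rw [two_mul, h d, Fintype.sum_sum_type]
  simp only [eIdx, Sum.elim_inl, Sum.elim_inr]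
  rw [Fin.sum_univ_eq_sum_range (fun k => f (d + k)) d,
    Fin.sum_univ_eq_sum_range (fun k => f k) d]

/-- if `p` and `q` have a common root, the Sylvester determinant vanishes -/
lemma sylv_det_eq_zero {K : Type*} [Field K] {d : ℕ} (hd : 0 < d) {p q : K[X]}
    (hp : p.natDegree ≤ d) (hq : q.natDegree ≤ d) {y : K}
    (hyp : p.eval y = 0) (hyq : q.eval y = 0) : (sylv d p q).det = 0 := by
  rw [← Matrix.exists_mulVec_eq_zero_iff]
  refine ⟨fun c => y ^ (eIdx d c), ?_, ?_⟩
  · intro h0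
    have := congrFun h0 (Sum.inl ⟨0, hd⟩)
    simp [eIdx] at this
  · funext r
    have hr : (rowPoly d p q r).natDegree < 2 * d := by
      have h1 : (rowPoly d p q r).eval y = 0 ∧ (rowPoly d p q r).natDegree < 2 * d := by
        cases r with
        | inl i =>
          constructor
          · simp [rowPoly, hyp]
          · refine lt_of_le_of_lt (natDegree_mul_le.trans ?_) (by omega : 2*d - 1 < 2*d)
            have := i.2
            simp only [natDegree_X_pow]
            omega
        | inr i =>
          constructor
          · simp [rowPoly, hyq]
          · refine lt_of_le_of_lt (natDegree_mul_le.trans ?_) (by omega : 2*d - 1 < 2*d)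
            have := i.2
            simp only [natDegree_X_pow]
            omega
      exact h1.2
    have hev : (rowPoly d p q r).eval y = 0 := by
      cases r with
      | inl i => simp [rowPoly, hyp]
      | inr i => simp [rowPoly, hyq]
    have : ((sylv d p q).mulVec fun c => y ^ (eIdx d c)) r
        = (rowPoly d p q r).eval y := by
      simp only [Matrix.mulVec, dotProduct, sylv]
      rw [sum_eIdx d (fun k => (rowPoly d p q r).coeff k * y ^ k)]
      exact (eval_eq_sum_range' hr y).symm
    rw [this, hev]; rfl


lemma coeff_finsum {K : Type*} [CommRing K] {d : ℕ} (w : Fin d → K) (j : Fin d) :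
    (∑ i : Fin d, C (w i) * X ^ (i : ℕ)).coeff (j : ℕ) = w j := by
  rw [finset_sum_coeff]
  simp only [coeff_C_mul, coeff_X_pow, mul_ite, mul_one, mul_zero]
  rw [Finset.sum_eq_single j ?_ ?_]
  · simp
  · intro i _ hij
    have : (j : ℕ) ≠ (i : ℕ) := fun h => hij (Fin.val_injective h).symm
    simp [this]
  · intro h
    exact absurd (Finset.mem_univ j) h

/-- over an algebraically closed field, if the Sylvester determinant vanishes then the
polynomials have a common root -/
lemma sylv_det_eq_zero_imp {K : Type*} [Field K] [IsAlgClosed K] {d : ℕ} (hd : 0 < d)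
    {p q : K[X]} (hp : p.natDegree ≤ d) (hq : q.natDegree ≤ d)
    (hpd : p.coeff d ≠ 0) (hqd : q.coeff d ≠ 0)
    (h : (sylv d p q).det = 0) : ∃ y, p.eval y = 0 ∧ q.eval y = 0 := by
  classical
  have hp0 : p ≠ 0 := fun h' => hpd (by simp [h'])
  have hq0 : q ≠ 0 := fun h' => hqd (by simp [h'])
  have hpdeg : p.natDegree = d := le_antisymm hp (le_natDegree_of_ne_zero hpd)
  have hqdeg : q.natDegree = d := le_antisymm hq (le_natDegree_of_ne_zero hqd)
  obtain ⟨u, hu0, hu⟩ := (Matrix.exists_vecMul_eq_zero_iff).2 h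
  set A : K[X] := ∑ i : Fin d, C (u (Sum.inl i)) * X ^ (i : ℕ) with hA
  set B : K[X] := ∑ i : Fin d, C (u (Sum.inr i)) * X ^ (i : ℕ) with hB
  have hAdeg : A.natDegree ≤ d - 1 := natDegree_sum_le_of_forall_le _ _ fun i _ =>
    (natDegree_C_mul_X_pow_le _ _).trans (by omega)
  have hBdeg : B.natDegree ≤ d - 1 := natDegree_sum_le_of_forall_le _ _ fun i _ =>
    (natDegree_C_mul_X_pow_le _ _).trans (by omega)
  have key : A * p + B * q = 0 := by
    ext k
    simp only [coeff_add, coeff_zero]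
    by_cases hk : k < 2 * d
    · -- use the kernel relation at the column with exponent k
      have hcol : ∃ c : Idx d, eIdx d c = k := by
        by_cases h' : k < d
        · exact ⟨Sum.inl ⟨k, h'⟩, rfl⟩
        · exact ⟨Sum.inr ⟨k - d, by omega⟩, by simp [eIdx]; omega⟩
      obtain ⟨c, hc⟩ := hcol
      have := congrFun hu c
      simp only [Matrix.vecMul, dotProduct, sylv, Pi.zero_apply] at this
      rw [Fintype.sum_sum_type] at this
      have hcoeffA : (A * p).coeff k = ∑ i : Fin d, u (Sum.inl i) * (X ^ (i:ℕ) * p).coeff k := by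
        rw [hA, Finset.sum_mul, finset_sum_coeff]
        refine Finset.sum_congr rfl fun i _ => ?_
        rw [mul_assoc, coeff_C_mul]
      have hcoeffB : (B * q).coeff k = ∑ i : Fin d, u (Sum.inr i) * (X ^ (i:ℕ) * q).coeff k := by
        rw [hB, Finset.sum_mul, finset_sum_coeff]
        refine Finset.sum_congr rfl fun i _ => ?_
        rw [mul_assoc, coeff_C_mul]
      rw [hcoeffA, hcoeffB, ← hc]
      simpa [rowPoly] using this
    · have h1 : (A * p).coeff k = 0 := by
        apply coeff_eq_zero_of_natDegree_lt
        refine lt_of_le_of_lt natDegree_mul_le ?_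
        omega
      have h2 : (B * q).coeff k = 0 := by
        apply coeff_eq_zero_of_natDegree_lt
        refine lt_of_le_of_lt natDegree_mul_le ?_
        omega
      rw [h1, h2, add_zero]
  -- now get a common root
  by_contra hnone
  push_neg at hnone
  -- gcd is a unit
  set g := EuclideanDomain.gcd p q with hg
  have hgne : g ≠ 0 := fun h' => hp0 (EuclideanDomain.gcd_eq_zero_iff.1 h').1
  have hgunit : IsUnit g := by
    by_contra hgu
    have hdeg : g.degree ≠ 0 := by
      intro h'
      exact hgu (isUnit_iff_degree_eq_zero.2 h')
    obtain ⟨y, hy⟩ := IsAlgClosed.exists_root g hdeg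
    have hyp : p.eval y = 0 := by
      obtain ⟨r, hr⟩ := EuclideanDomain.gcd_dvd_left p q
      rw [hr, eval_mul, show eval y g = 0 from hy, zero_mul]
    have hyq : q.eval y = 0 := by
      obtain ⟨r, hr⟩ := EuclideanDomain.gcd_dvd_right p q
      rw [hr, eval_mul, show eval y g = 0 from hy, zero_mul]
    exact hnone y hyp hyq
  have hcop : IsCoprime p q := EuclideanDomain.gcd_isUnit_iff.1 hgunit
  have hqA : q ∣ A * p := ⟨-B, by linear_combination key⟩
  have hqA' : q ∣ A := hcop.symm.dvd_of_dvd_mul_right hqA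
  have hA0 : A = 0 := by
    by_contra hA0
    have := Polynomial.natDegree_le_of_dvd hqA' hA0
    omega
  have hB0 : B = 0 := by
    have : B * q = 0 := by rw [hA0] at key; simpa using key
    rcases mul_eq_zero.1 this with h' | h'
    · exact h'
    · exact absurd h' hq0
  apply hu0
  funext r
  cases r with
  | inl i =>
    have := coeff_finsum (fun i => u (Sum.inl i)) i
    rw [← hA, hA0] at this
    simpa using this.symm
  | inr i =>
    have := coeff_finsum (fun i => u (Sum.inr i)) i
    rw [← hB, hB0] at this
    simpa using this.symm


/-- degree bound for determinants with weighted entries -/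
lemma natDegree_det_le_weights {ι : Type*} [Fintype ι] [DecidableEq ι] {k : Type*}
    [CommRing k] (M : Matrix ι ι (Polynomial k)) (ρ γ : ι → ℕ)
    (h : ∀ r c, M r c ≠ 0 → γ c ≤ ρ r ∧ (M r c).natDegree ≤ ρ r - γ c) :
    (M.det).natDegree ≤ ∑ r, ρ r - ∑ c, γ c := by
  rw [Matrix.det_apply]
  apply natDegree_sum_le_of_forall_le
  intro σ _
  rw [Units.smul_def, zsmul_eq_mul]
  refine natDegree_mul_le.trans ?_
  rw [natDegree_intCast, zero_add]
  by_cases hz : ∀ c, M (σ c) c ≠ 0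
  · refine (natDegree_prod_le _ _).trans ?_
    have h1 : ∀ c : ι, (M (σ c) c).natDegree ≤ ρ (σ c) - γ c := fun c => (h _ _ (hz c)).2
    refine (Finset.sum_le_sum fun c _ => h1 c).trans ?_
    rw [Finset.sum_tsub_distrib _ (fun c _ => (h _ _ (hz c)).1)]
    rw [Equiv.sum_comp σ ρ]
  · push_neg at hz
    obtain ⟨c0, hc0⟩ := hz
    rw [Finset.prod_eq_zero (f := fun i => M (σ i) i) (Finset.mem_univ c0) hc0]
    simp


section Curve

variable {K : Type*} [CommRing K]

/-- the polynomial `(α + β z)^d - γ (a(w) + b z)^d - δ` as an element of `K[w][z]` -/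
noncomputable def curve (d : ℕ) (α β γ δ : K) (a : K[X]) (b : K) : Polynomial (K[X]) :=
  (C (C α) + C (C β) * X) ^ d - C (C γ) * (C a + C (C b) * X) ^ d - C (C δ)

lemma curve_coeff {d s : ℕ} (hs : s ≤ d) (α β γ δ : K) (a : K[X]) (b : K) :
    (curve d α β γ δ a b).coeff s
      = C (α ^ (d-s) * β ^ s * (d.choose s : K)) - C γ * a ^ (d-s) * C (b ^ s * (d.choose s : K))
        - (if s = 0 then C δ else 0) := by
  simp only [curve, coeff_sub, coeff_C_mul, linPow_coeff, if_pos hs, coeff_C]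
  rw [← map_natCast (C : K →+* K[X]) (d.choose s), ← C_pow, ← C_pow, ← C_pow,
    ← C_mul, ← C_mul]
  rw [show a ^ (d - s) * C (b ^ s) * C ((d.choose s : K)) = a ^ (d-s) * C (b ^ s * (d.choose s : K)) by rw [C_mul]; ring]
  ring

lemma curve_coeff_of_gt {d s : ℕ} (hs : d < s) (α β γ δ : K) (a : K[X]) (b : K) :
    (curve d α β γ δ a b).coeff s = 0 := by
  have hs0 : s ≠ 0 := by omega
  simp only [curve, coeff_sub, coeff_C_mul, linPow_coeff, if_neg (not_le.2 hs), coeff_C,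
    if_neg hs0]
  ring

lemma curve_natDegree_le (d : ℕ) (α β γ δ : K) (a : K[X]) (b : K) :
    (curve d α β γ δ a b).natDegree ≤ d :=
  natDegree_le_iff_coeff_eq_zero.2 fun _ hs => curve_coeff_of_gt hs α β γ δ a b

lemma curve_coeff_natDegree_le {d : ℕ} (s : ℕ) (α β γ δ : K) {a : K[X]} (b : K)
    (ha : a.natDegree ≤ 1) :
    ((curve d α β γ δ a b).coeff s).natDegree ≤ d - s := by
  rcases le_or_gt s d with hs | hs
  · rw [curve_coeff hs]
    refine (natDegree_sub_le _ _).trans ?_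
    simp only [max_le_iff]
    constructor
    · refine (natDegree_sub_le _ _).trans ?_
      simp only [max_le_iff, natDegree_C]
      refine ⟨by omega, ?_⟩
      refine natDegree_mul_le.trans ?_
      simp only [natDegree_C, add_zero]
      refine natDegree_mul_le.trans ?_
      simp only [natDegree_C, zero_add]
      refine (natDegree_pow_le).trans ?_
      calc (d - s) * a.natDegree ≤ (d - s) * 1 := Nat.mul_le_mul_left _ ha
        _ = d - s := mul_one _
    · split_ifs with h
      · simp
      · simp
  · rw [curve_coeff_of_gt hs]
    simp

lemma curve_coeff_top {d : ℕ} (hd : 0 < d) (α β γ δ : K) (a : K[X]) (b : K) :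
    (curve d α β γ δ a b).coeff d = C (β ^ d - γ * b ^ d) := by
  rw [curve_coeff le_rfl]
  simp only [Nat.sub_self, pow_zero, Nat.choose_self, Nat.cast_one, mul_one, one_mul,
    if_neg hd.ne', map_sub, map_mul, sub_zero]

lemma curve_eval {K : Type*} [CommRing K] (d : ℕ) (α β γ δ : K) (a : K[X]) (b : K)
    (w0 z0 : K) :
    ((curve d α β γ δ a b).map (evalRingHom w0)).eval z0
      = (α + β * z0) ^ d - γ * (a.eval w0 + b * z0) ^ d - δ := by
  simp [curve, Polynomial.map_sub, Polynomial.map_add, Polynomial.map_mul, Polynomial.map_pow,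
    map_C, map_X, eval_sub, eval_add, eval_mul, eval_pow, eval_C, eval_X, coe_evalRingHom]

end Curve


section Res

variable {K : Type*} [CommRing K]

noncomputable def resOf (d : ℕ) (P Q : Polynomial (K[X])) : K[X] := (sylv d P Q).det

lemma resOf_eval (d : ℕ) (P Q : Polynomial (K[X])) (w0 : K) :
    (resOf d P Q).eval w0
      = (sylv d (P.map (evalRingHom w0)) (Q.map (evalRingHom w0))).det := by
  rw [resOf, show (sylv d P Q).det.eval w0 = (evalRingHom w0) (sylv d P Q).det from rfl,
    RingHom.map_det, RingHom.mapMatrix_apply, sylv_map]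

lemma natDegree_resOf_le {d : ℕ} {P Q : Polynomial (K[X])}
    (hP1 : ∀ s, d < s → P.coeff s = 0) (hP2 : ∀ s, (P.coeff s).natDegree ≤ d - s)
    (hQ1 : ∀ s, d < s → Q.coeff s = 0) (hQ2 : ∀ s, (Q.coeff s).natDegree ≤ d - s) :
    (resOf d P Q).natDegree ≤ d ^ 2 := by
  classical
  have h0 : ∀ (R : Polynomial (K[X])), (∀ s, d < s → R.coeff s = 0) →
      (∀ s, (R.coeff s).natDegree ≤ d - s) → ∀ (i : ℕ) (c : Idx d),
      (X ^ i * R).coeff (eIdx d c) ≠ 0 →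
      eIdx d c ≤ d + i ∧ ((X ^ i * R).coeff (eIdx d c)).natDegree ≤ (d + i) - eIdx d c := by
    intro R hR1 hR2 i c hne
    rw [X_pow_mul, coeff_mul_X_pow'] at hne ⊢
    by_cases hle : i ≤ eIdx d c
    · rw [if_pos hle] at hne ⊢
      have h1 : eIdx d c - i ≤ d := by
        by_contra h'
        exact hne (hR1 _ (by omega))
      refine ⟨by omega, (hR2 _).trans ?_⟩
      omega
    · rw [if_neg hle] at hne
      exact absurd rfl hne
  have key := natDegree_det_le_weights (sylv d P Q) (fun r => d + shIdx d r) (eIdx d) ?_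
  · refine key.trans ?_
    have hsum : ∑ r : Idx d, (d + shIdx d r) = d ^ 2 + ∑ c : Idx d, eIdx d c := by
      simp only [Fintype.sum_sum_type, shIdx, eIdx, Sum.elim_inl, Sum.elim_inr,
        Finset.sum_add_distrib, Finset.sum_const, Finset.card_univ, Fintype.card_fin,
        Fintype.card_sum, smul_eq_mul, mul_one]
      rw [pow_two]
      ring
    rw [hsum, Nat.add_sub_cancel]
  · intro r c hne
    cases r with
    | inl i =>
      simp only [sylv, rowPoly, Sum.elim_inl] at hne ⊢
      exact h0 P hP1 hP2 i c hne
    | inr i =>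
      simp only [sylv, rowPoly, Sum.elim_inr] at hne ⊢
      exact h0 Q hQ1 hQ2 i c hne

end Res

section AuxFin

variable {K : Type*} [Field K]

lemma aux_root_finite {c : K} (hc : c ≠ 0) {d : ℕ} (hd : 0 < d) :
    {t : K | (1:K) - c * (-t) ^ d = 0}.Finite := by
  set P : K[X] := C 1 - C (c * (-1:K)^d) * X ^ d with hPdef
  have hP : P ≠ 0 := by
    intro h
    have h2 : P.coeff d = 0 := by rw [h]; simp
    rw [hPdef] at h2
    have h3 : c * (-1:K)^d = 0 := by
      have h4 : P.coeff d = -(c * (-1:K)^d) := by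
        rw [hPdef, coeff_sub, coeff_C_mul, coeff_X_pow, if_pos rfl, coeff_C, if_neg hd.ne']
        ring
      rw [h4, neg_eq_zero] at h2
      exact h2
    rcases mul_eq_zero.1 h3 with h2 | h2
    · exact hc h2
    · exact pow_ne_zero d (by norm_num : (-1:K) ≠ 0) h2
  refine Set.Finite.subset (finite_setOf_isRoot hP) ?_
  intro x hx
  simp only [Set.mem_setOf_eq] at hx ⊢
  show P.IsRoot x
  rw [hPdef]
  simp only [IsRoot, eval_sub, eval_mul, eval_pow, eval_C, eval_one, eval_X]
  rw [show c * (-1:K)^d * x^d = c * (-x)^d by rw [neg_pow]; ring]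
  simpa using hx

lemma aux_pair_finite (s1 s2 : K × K) :
    {t : K | s1 ≠ s2 ∧ s1.2 + t * s1.1 = s2.2 + t * s2.1}.Finite := by
  by_cases h : s1.1 = s2.1
  · refine Set.Finite.subset (Set.finite_empty) ?_
    rintro x ⟨hne, heq⟩
    rw [h] at heq
    have h2 : s1.2 = s2.2 := by
      have := add_right_cancel heq
      exact this
    exact absurd (Prod.ext h h2) hne
  · refine Set.Finite.subset (Set.finite_singleton ((s2.2 - s1.2) / (s1.1 - s2.1))) ?_
    rintro x ⟨hne, heq⟩
    have hsub : s1.1 - s2.1 ≠ 0 := sub_ne_zero.2 h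
    simp only [Set.mem_singleton_iff]
    rw [eq_div_iff hsub]
    linear_combination heq

end AuxFin

end Stmt5Aux

open Stmt5Aux Polynomial

set_option linter.unusedVariables false in
theorem stmt5 (F : Type*) [Field F] [Fintype F] (p : ℕ) [CharP F p]
    (d : ℕ) (hd : 1 < d) (hgcd : Nat.gcd d (Fintype.card F - 1) = 1) (hpd : ¬ p ∣ d)
    (c1 c2 c3 c4 c5 : F) (h1 : c1 ≠ 0) (h2 : c2 ≠ 0) (h3 : c3 ≠ 0) (h4 : c4 ≠ 0)
    (h5 : c5 ≠ 0) :
    Nat.card {zx : AlgebraicClosure F × AlgebraicClosure F //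
      zx.1 ^ d - algebraMap F (AlgebraicClosure F) c1 * zx.2 ^ d
        = algebraMap F (AlgebraicClosure F) c2 ∧
      (zx.1 + 1) ^ d - algebraMap F (AlgebraicClosure F) c3
          * (zx.2 + algebraMap F (AlgebraicClosure F) c4) ^ d
        = algebraMap F (AlgebraicClosure F) c5} ≤ d ^ 2 := by
  classical
  set K := AlgebraicClosure F with hKdef
  set φ : F →+* K := algebraMap F K with hφ
  set S : Set (K × K) := {zx : K × K | zx.1 ^ d - φ c1 * zx.2 ^ d = φ c2 ∧
      (zx.1 + 1) ^ d - φ c3 * (zx.2 + φ c4) ^ d = φ c5} with hSdef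
  show Nat.card ↥S ≤ d ^ 2
  have hd0 : 0 < d := by omega
  rcases Set.finite_or_infinite S with hfin | hinf
  swap
  · haveI := Set.infinite_coe_iff.2 hinf
    rw [Nat.card_eq_zero_of_infinite]
    exact Nat.zero_le _
  have h1' : φ c1 ≠ 0 := fun h => h1 (φ.injective (by rw [h, map_zero]))
  have h3' : φ c3 ≠ 0 := fun h => h3 (φ.injective (by rw [h, map_zero]))
  set bad : Set K := ({t : K | (1:K) - φ c1 * (-t)^d = 0} ∪ {t : K | (1:K) - φ c3 * (-t)^d = 0}) ∪
      ⋃ s1 ∈ S, ⋃ s2 ∈ S, {t : K | s1 ≠ s2 ∧ s1.2 + t * s1.1 = s2.2 + t * s2.1} with hbad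
  have hbadfin : bad.Finite := by
    refine Set.Finite.union (Set.Finite.union (aux_root_finite h1' hd0) (aux_root_finite h3' hd0)) ?_
    exact hfin.biUnion (fun s1 _ => hfin.biUnion (fun s2 _ => aux_pair_finite s1 s2))
  obtain ⟨t, ht⟩ := hbadfin.infinite_compl.nonempty
  rw [Set.mem_compl_iff] at ht
  have ht1 : (1:K) - φ c1 * (-t)^d ≠ 0 := fun h =>
    ht (Set.mem_union_left _ (Set.mem_union_left _ h))
  have ht3 : (1:K) - φ c3 * (-t)^d ≠ 0 := fun h =>
    ht (Set.mem_union_left _ (Set.mem_union_right _ h))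
  have hsep : ∀ s1 ∈ S, ∀ s2 ∈ S, s1.2 + t * s1.1 = s2.2 + t * s2.1 → s1 = s2 := by
    intro s1 hs1 s2 hs2 heq
    by_contra hne
    exact ht (Set.mem_union_right _
      (Set.mem_biUnion hs1 (Set.mem_biUnion hs2 ⟨hne, heq⟩)))
  set P : Polynomial (K[X]) := curve d 0 1 (φ c1) (φ c2) X (-t) with hPdef
  set Q : Polynomial (K[X]) := curve d 1 1 (φ c3) (φ c5) (X + C (φ c4)) (-t) with hQdef
  have hP1 : ∀ s, d < s → P.coeff s = 0 := fun s hs => curve_coeff_of_gt hs _ _ _ _ _ _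
  have hQ1 : ∀ s, d < s → Q.coeff s = 0 := fun s hs => curve_coeff_of_gt hs _ _ _ _ _ _
  have hP2 : ∀ s, (P.coeff s).natDegree ≤ d - s := fun s =>
    curve_coeff_natDegree_le s _ _ _ _ _ natDegree_X_le
  have hQ2 : ∀ s, (Q.coeff s).natDegree ≤ d - s := fun s =>
    curve_coeff_natDegree_le s _ _ _ _ _ (natDegree_X_add_C _).le
  have hP3 : P.natDegree ≤ d := curve_natDegree_le _ _ _ _ _ _ _
  have hQ3 : Q.natDegree ≤ d := curve_natDegree_le _ _ _ _ _ _ _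
  have hPtop : P.coeff d = C ((1:K) - φ c1 * (-t)^d) := by
    rw [hPdef, curve_coeff_top hd0]
    norm_num
  have hQtop : Q.coeff d = C ((1:K) - φ c3 * (-t)^d) := by
    rw [hQdef, curve_coeff_top hd0]
    norm_num
  have hmapdegP : ∀ w0 : K, ((P.map (evalRingHom w0)).natDegree ≤ d) := fun w0 =>
    natDegree_map_le.trans hP3
  have hmapdegQ : ∀ w0 : K, ((Q.map (evalRingHom w0)).natDegree ≤ d) := fun w0 =>
    natDegree_map_le.trans hQ3
  have hmaptopP : ∀ w0 : K, (P.map (evalRingHom w0)).coeff d = (1:K) - φ c1 * (-t)^d := by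
    intro w0
    rw [coeff_map, hPtop]
    simp
  have hmaptopQ : ∀ w0 : K, (Q.map (evalRingHom w0)).coeff d = (1:K) - φ c3 * (-t)^d := by
    intro w0
    rw [coeff_map, hQtop]
    simp
  have hPeval : ∀ w0 z0 : K, (P.map (evalRingHom w0)).eval z0
      = z0 ^ d - φ c1 * (w0 - t * z0) ^ d - φ c2 := by
    intro w0 z0
    rw [hPdef, curve_eval]
    simp only [eval_X, zero_add, one_mul]
    rw [neg_mul, ← sub_eq_add_neg]
  have hQeval : ∀ w0 z0 : K, (Q.map (evalRingHom w0)).eval z0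
      = (z0 + 1) ^ d - φ c3 * ((w0 - t * z0) + φ c4) ^ d - φ c5 := by
    intro w0 z0
    rw [hQdef, curve_eval]
    simp only [eval_add, eval_X, eval_C, one_mul]
    rw [add_comm (1:K) z0, neg_mul, ← sub_eq_add_neg, sub_add_eq_add_sub]
  have hmem : ∀ (z0 w0 : K), ((P.map (evalRingHom w0)).eval z0 = 0 ∧
      (Q.map (evalRingHom w0)).eval z0 = 0) ↔ (z0, w0 - t * z0) ∈ S := by
    intro z0 w0
    rw [hPeval, hQeval, hSdef]
    simp only [Set.mem_setOf_eq]
    constructor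
    · rintro ⟨e1, e2⟩
      exact ⟨by linear_combination e1, by linear_combination e2⟩
    · rintro ⟨e1, e2⟩
      exact ⟨by linear_combination e1, by linear_combination e2⟩
  by_cases hres : resOf d P Q = 0
  · exfalso
    have hex : ∀ w0 : K, ∃ z0 : K, (z0, w0 - t * z0) ∈ S := by
      intro w0
      have hdet : (sylv d (P.map (evalRingHom w0)) (Q.map (evalRingHom w0))).det = 0 := by
        rw [← resOf_eval, hres, eval_zero]
      obtain ⟨y, hy1, hy2⟩ := sylv_det_eq_zero_imp hd0 (hmapdegP w0) (hmapdegQ w0)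
        (by rw [hmaptopP w0]; exact ht1) (by rw [hmaptopQ w0]; exact ht3) hdet
      exact ⟨y, (hmem y w0).1 ⟨hy1, hy2⟩⟩
    choose g hg using hex
    have hinj : Function.Injective (fun w0 : K => ((g w0, w0 - t * g w0) : K × K)) := by
      intro w1 w2 h
      have ha := congrArg Prod.fst h
      have hb := congrArg Prod.snd h
      simp only at ha hb
      rw [ha] at hb
      linear_combination hb
    exact Set.not_infinite.2 hfin (Set.infinite_of_injective_forall_mem hinj hg)
  · have key : ∀ zx ∈ S, (resOf d P Q).eval (zx.2 + t * zx.1) = 0 := by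
      intro zx hzx
      have hz : (zx.2 + t * zx.1) - t * zx.1 = zx.2 := by ring
      have hm : (zx.1, (zx.2 + t * zx.1) - t * zx.1) ∈ S := by
        rw [hz]
        simpa using hzx
      have hco := (hmem zx.1 (zx.2 + t * zx.1)).2 hm
      rw [resOf_eval]
      exact sylv_det_eq_zero hd0 (hmapdegP _) (hmapdegQ _) hco.1 hco.2
    set T := (resOf d P Q).roots.toFinset with hT
    have hf : ∀ s : ↥S, (s : K × K).2 + t * (s : K × K).1 ∈ T := by
      intro s
      rw [hT, Multiset.mem_toFinset, mem_roots']
      exact ⟨hres, key s s.2⟩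
    have hinj : Function.Injective
        (fun s : ↥S => (⟨(s : K × K).2 + t * (s : K × K).1, hf s⟩ : {x // x ∈ T})) := by
      intro s1 s2 h
      have h' := congrArg Subtype.val h
      simp only at h'
      exact Subtype.ext (hsep s1 s1.2 s2 s2.2 h')
    calc Nat.card ↥S ≤ Nat.card {x // x ∈ T} := Nat.card_le_card_of_injective _ hinj
      _ = T.card := Nat.card_eq_finsetCard T
      _ ≤ Multiset.card (resOf d P Q).roots := (resOf d P Q).roots.toFinset_card_le
      _ ≤ (resOf d P Q).natDegree := card_roots' _
      _ ≤ d ^ 2 := natDegree_resOf_le hP1 hP2 hQ1 hQ2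
end

section
/- Let F_q be a finite field of characteristic p, let d > 1 with gcd(d, q-1) = 1 and p ∤ d, and let c1, c2, c3, c4, c5 ∈ F_q be nonzero. Then the system of equations z^d - c1·x^d = c2 and (z+1)^d - c3·(x+c4)^d = c5 has at most d² solutions (z, x) in F_q × F_q. -/
open Polynomial

lemma aux_pow_inj {F : Type*} [Field F] [Fintype F] {d : ℕ} (hd : d ≠ 0)
    (hgcd : Nat.gcd d (Fintype.card F - 1) = 1) {a b : F} (h : a ^ d = b ^ d) : a = b := by
  classical
  rcases eq_or_ne b 0 with rfl | hb
  · rw [zero_pow hd, pow_eq_zero_iff hd] at h; exact h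
  rcases eq_or_ne a 0 with rfl | ha
  · rw [zero_pow hd] at h
    exact absurd ((pow_eq_zero_iff hd).mp h.symm) hb
  · set u : Fˣ := Units.mk0 a ha * (Units.mk0 b hb)⁻¹ with hu
    have hupow : u ^ d = 1 := by
      ext
      push_cast [hu]
      field_simp
      rw [Units.val_mk0, Units.val_mk0, div_pow, h, div_self (pow_ne_zero _ hb)]
    have h1 : orderOf u ∣ d := orderOf_dvd_of_pow_eq_one hupow
    have h2 : orderOf u ∣ Fintype.card F - 1 := by
      rw [← Fintype.card_units (α := F)]
      exact orderOf_dvd_card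
    have : orderOf u = 1 := Nat.eq_one_of_dvd_one (hgcd ▸ Nat.dvd_gcd h1 h2)
    have hu1 : u = 1 := orderOf_eq_one_iff.mp this
    have : a * b⁻¹ = 1 := by
      have := congrArg (Units.val) hu1
      simpa [hu] using this
    field_simp at this
    exact this

lemma aux_irr {F : Type*} [Field F] {d : ℕ} (hd : 0 < d) (hdF : (d : F) ≠ 0)
    {c1 c2 : F} (h1 : c1 ≠ 0) (h2 : c2 ≠ 0) :
    Irreducible ((X : (Polynomial F)[X]) ^ d - C (C c1 * X ^ d + C c2)) := by
  classical
  set A : Polynomial F := C c1 * X ^ d + C c2 with hA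
  have hAdeg : A.natDegree = d := by
    rw [hA, natDegree_add_C, natDegree_C_mul_X_pow _ _ h1]
  have hA0 : A ≠ 0 := by
    intro h
    rw [h, natDegree_zero] at hAdeg
    omega
  have hc1d : c1 * (d : F) ≠ 0 := mul_ne_zero h1 hdF
  have hderiv : derivative A = C (c1 * (d : F)) * X ^ (d - 1) := by
    rw [hA, derivative_add, derivative_C, add_zero, derivative_C_mul_X_pow]
  have hx : (X : Polynomial F) * X ^ (d - 1) = X ^ d := by
    rw [← pow_succ']
    congr 1
    omega
  have hsep : A.Separable := by
    refine ⟨C c2⁻¹, -(C (c2⁻¹ * c1 * (c1 * (d : F))⁻¹)) * X, ?_⟩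
    rw [hderiv, hA]
    have e1 : c2⁻¹ * c1 * (c1 * (d : F))⁻¹ * (c1 * (d : F)) = c2⁻¹ * c1 := by
      field_simp
    calc C c2⁻¹ * (C c1 * X ^ d + C c2) + -C (c2⁻¹ * c1 * (c1 * (d:F))⁻¹) * X * (C (c1 * (d:F)) * X ^ (d - 1))
        = C (c2⁻¹ * c1) * X ^ d + C (c2⁻¹ * c2)
          - C (c2⁻¹ * c1 * (c1 * (d:F))⁻¹ * (c1 * (d:F))) * (X * X ^ (d - 1)) := by
          push_cast [C_mul]
          ring
      _ = 1 := by
          rw [e1, hx, inv_mul_cancel₀ h2, map_one]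
          ring
  have hsqf : Squarefree A := hsep.squarefree
  obtain ⟨π, hπirr, hπdvd⟩ := WfDvdMonoid.exists_irreducible_factor
    (Polynomial.not_isUnit_of_natDegree_pos A (hAdeg ▸ hd)) hA0
  have hπprime : Prime π := (UniqueFactorizationMonoid.irreducible_iff_prime).mp hπirr
  have hP : (Ideal.span {π} : Ideal (Polynomial F)).IsPrime :=
    (Ideal.span_singleton_prime hπprime.ne_zero).mpr hπprime
  have hmono : ((X : (Polynomial F)[X]) ^ d - C A).Monic := monic_X_pow_sub_C A hd.ne'
  have hfdeg : ((X : (Polynomial F)[X]) ^ d - C A).natDegree = d := natDegree_X_pow_sub_C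
  have hei : ((X : (Polynomial F)[X]) ^ d - C A).IsEisensteinAt (Ideal.span {π}) := by
    constructor
    · rw [hmono.leadingCoeff]
      intro hmem
      exact hP.ne_top (Ideal.eq_top_iff_one _ |>.mpr hmem)
    · intro n hn
      rw [hfdeg] at hn
      rw [coeff_sub, coeff_X_pow, if_neg (by omega : ¬ n = d), coeff_C]
      rcases eq_or_ne n 0 with rfl | hn0
      · simpa using neg_mem (Ideal.mem_span_singleton.mpr hπdvd)
      · simp [hn0]
    · rw [coeff_sub, coeff_X_pow, if_neg (by omega : ¬ 0 = d), coeff_C, if_pos rfl,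
        Ideal.span_singleton_pow, Ideal.mem_span_singleton, zero_sub, dvd_neg]
      intro hdvd
      exact hπirr.not_isUnit (hsqf π (by rwa [pow_two] at hdvd))
  exact hei.irreducible hP hmono.isPrimitive (by rw [hfdeg]; exact hd)

lemma aux_ndvd {F : Type*} [Field F] {d : ℕ} (hd : 1 < d) (hdF : (d : F) ≠ 0)
    (A B : Polynomial F) :
    ¬ ((X : (Polynomial F)[X]) ^ d - C A ∣ (X + 1) ^ d - C B) := by
  intro hdvd
  set f : (Polynomial F)[X] := X ^ d - C A with hf
  set g : (Polynomial F)[X] := (X + 1) ^ d - C B with hg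
  have hd0 : d ≠ 0 := by omega
  have hfm : f.Monic := monic_X_pow_sub_C A hd0
  have hXd : ((X + 1 : (Polynomial F)[X]) ^ d).natDegree = d := by
    rw [natDegree_pow]
    rw [show (X + 1 : (Polynomial F)[X]) = X + C 1 by rw [map_one], natDegree_X_add_C]
    omega
  have hX1m : ((X + 1 : (Polynomial F)[X]) ^ d).Monic := by
    rw [show (X + 1 : (Polynomial F)[X]) = X + C 1 by rw [map_one]]
    exact (monic_X_add_C 1).pow d
  have hgm : g.Monic := by
    rw [hg, sub_eq_add_neg]
    refine hX1m.add_of_left ?_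
    rw [degree_neg]
    calc (C B).degree ≤ 0 := degree_C_le
      _ < d := by exact_mod_cast WithBot.coe_lt_coe.mpr (by omega : 0 < d)
      _ = ((X+1:(Polynomial F)[X])^d).degree := by rw [degree_eq_natDegree hX1m.ne_zero, hXd]
  have hgdeg : g.natDegree = d := by rw [hg, sub_eq_add_neg, ← map_neg C B, natDegree_add_C, hXd]
  have hfdeg : f.natDegree = d := natDegree_X_pow_sub_C
  obtain ⟨u, hu⟩ := hdvd
  have hu0 : u ≠ 0 := by
    intro h
    rw [h, mul_zero] at hu
    exact hgm.ne_zero hu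
  have hudeg : u.natDegree = 0 := by
    have := natDegree_mul hfm.ne_zero hu0
    rw [← hu, hgdeg, hfdeg] at this
    omega
  have hulc : u.coeff 0 = 1 := by
    have h := hgm.leadingCoeff
    rw [hu, leadingCoeff_mul, hfm.leadingCoeff, one_mul] at h
    rwa [leadingCoeff, hudeg] at h
  have hu1 : u = 1 := by
    rw [eq_C_of_natDegree_eq_zero hudeg, hulc, map_one]
  rw [hu1, mul_one] at hu
  have hcoeff := congrArg (fun q => Polynomial.coeff q (d - 1)) hu
  simp only [hg, hf, coeff_sub, coeff_X_add_one_pow, coeff_X_pow, coeff_C] at hcoeff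
  rw [if_neg (by omega : ¬ d - 1 = d), if_neg (by omega : ¬ d - 1 = 0), if_neg (by omega : ¬ d - 1 = 0)] at hcoeff
  have : (d.choose (d-1) : Polynomial F) = 0 := by
    simpa using hcoeff
  have hchoose : d.choose (d - 1) = d := by
    simpa using Nat.choose_symm (by omega : 1 ≤ d)
  rw [hchoose] at this
  rw [← C_eq_natCast] at this
  exact hdF (C_eq_zero.mp this)

lemma aux_modpow {R : Type*} [CommRing R] [Nontrivial R] {d m : ℕ} (hd : 0 < d)
    (hm : m < 2 * d) (A : R) :
    (X : R[X]) ^ m %ₘ (X ^ d - C A) = if m < d then X ^ m else C A * X ^ (m - d) := by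
  have hmono : ((X : R[X]) ^ d - C A).Monic := monic_X_pow_sub_C A hd.ne'
  have hfd : ((X : R[X]) ^ d - C A).degree = (d : ℕ) := degree_X_pow_sub_C hd A
  by_cases h : m < d
  · rw [if_pos h]
    refine (modByMonic_eq_self_iff hmono).mpr ?_
    rw [hfd, degree_X_pow]
    exact_mod_cast h
  · rw [if_neg h]
    push_neg at h
    have key : (X : R[X]) ^ m = (X ^ d - C A) * X ^ (m - d) + C A * X ^ (m - d) := by
      rw [sub_mul, ← pow_add, (by omega : d + (m - d) = m)]
      ring
    rw [key, add_modByMonic,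
      (modByMonic_eq_zero_iff_dvd hmono).mpr ⟨X ^ (m - d), rfl⟩, zero_add]
    refine (modByMonic_eq_self_iff hmono).mpr ?_
    rw [hfd]
    calc (C A * X ^ (m - d)).degree ≤ (C A).degree + ((X : R[X]) ^ (m - d)).degree :=
          degree_mul_le _ _
      _ ≤ 0 + ((m - d : ℕ) : WithBot ℕ) := by
          refine add_le_add degree_C_le ?_
          rw [degree_X_pow]
      _ = ((m - d : ℕ) : WithBot ℕ) := zero_add _
      _ < (d : ℕ) := by exact_mod_cast (by omega : m - d < d)

lemma aux_det_bound {F : Type*} [Field F] {n : Type*} [Fintype n] [DecidableEq n]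
    (M : Matrix n n (Polynomial F)) (m : ℕ) (hM : ∀ i j, (M i j).natDegree ≤ m) :
    M.det.natDegree ≤ Fintype.card n * m := by
  rw [Matrix.det_apply]
  refine natDegree_sum_le_of_forall_le _ _ ?_
  intro σ _
  calc (Equiv.Perm.sign σ • ∏ i, M (σ i) i).natDegree
      ≤ (∏ i, M (σ i) i).natDegree := by
        rw [Units.smul_def, zsmul_eq_mul]
        refine (natDegree_mul_le).trans ?_
        simp
    _ ≤ ∑ i, (M (σ i) i).natDegree := natDegree_prod_le _ _
    _ ≤ Fintype.card n * m := by
        refine (Finset.sum_le_card_nsmul _ _ m ?_).trans ?_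
        · intro i _
          exact hM _ _
        · simp [Finset.card_univ, Nat.smul_one_eq_cast]

lemma aux_binom {R : Type*} [CommRing R] (d : ℕ) :
    ((X : R[X]) + 1) ^ d - X ^ d = ∑ k ∈ Finset.range d, (d.choose k : R) • (X : R[X]) ^ k := by
  ext n
  rw [coeff_sub, coeff_X_add_one_pow, coeff_X_pow, finset_sum_coeff]
  simp only [coeff_smul, coeff_X_pow, smul_eq_mul, mul_ite, mul_one, mul_zero]
  rw [Finset.sum_ite_eq]
  rcases lt_trichotomy n d with h | h | h
  · simp [Finset.mem_range.mpr h, h.ne]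
  · subst h; simp
  · simp [Nat.choose_eq_zero_of_lt h, Finset.mem_range, (by omega : ¬ n < d), h.ne']

theorem stmt6 (F : Type*) [Field F] [Fintype F] (p : ℕ) [CharP F p]
    (d : ℕ) (hd : 1 < d) (hgcd : Nat.gcd d (Fintype.card F - 1) = 1) (hpd : ¬ p ∣ d)
    (c1 c2 c3 c4 c5 : F) (h1 : c1 ≠ 0) (h2 : c2 ≠ 0) (h3 : c3 ≠ 0) (h4 : c4 ≠ 0)
    (h5 : c5 ≠ 0) :
    Nat.card {zx : F × F //
      zx.1 ^ d - c1 * zx.2 ^ d = c2 ∧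
      (zx.1 + 1) ^ d - c3 * (zx.2 + c4) ^ d = c5} ≤ d ^ 2 := by
  classical
  have hd0 : 0 < d := by omega
  have hdF : (d : F) ≠ 0 := fun h => hpd ((CharP.cast_eq_zero_iff F p d).mp h)
  set A : Polynomial F := C c1 * X ^ d + C c2 with hA
  set B : Polynomial F := C c3 * (X + C c4) ^ d + C c5 with hB
  set f : (Polynomial F)[X] := X ^ d - C A with hf
  set g : (Polynomial F)[X] := (X + 1) ^ d - C B with hg
  have hmono : f.Monic := monic_X_pow_sub_C A hd0.ne'
  have hfdeg : f.natDegree = d := natDegree_X_pow_sub_C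
  have hAdeg : A.natDegree = d := by
    rw [hA, natDegree_add_C, natDegree_C_mul_X_pow _ _ h1]
  have hirr : Irreducible f := aux_irr hd0 hdF h1 h2
  have hndvd : ¬ f ∣ g := aux_ndvd hd hdF A B
  have hfprime : Prime f := (UniqueFactorizationMonoid.irreducible_iff_prime).mp hirr
  haveI hPf : (Ideal.span {f} : Ideal ((Polynomial F)[X])).IsPrime :=
    (Ideal.span_singleton_prime hfprime.ne_zero).mpr hfprime
  haveI : IsDomain (AdjoinRoot f) := Ideal.Quotient.isDomain (Ideal.span {f})
  set pb := AdjoinRoot.powerBasis' hmono with hpb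
  set b := pb.basis with hb
  set s : AdjoinRoot f := AdjoinRoot.mk f g with hs
  have hs0 : s ≠ 0 := fun h => hndvd (AdjoinRoot.mk_eq_zero.mp h)
  set M := Algebra.leftMulMatrix b s with hM
  set H : Polynomial F := M.det with hH
  have hH0 : H ≠ 0 := by
    have h := (Algebra.norm_ne_zero_iff_of_basis b).mpr hs0
    rwa [Algebra.norm_eq_matrix_det b s] at h
  -- H is a multiple of s in AdjoinRoot f
  have hdvdH : ∃ t, algebraMap (Polynomial F) (AdjoinRoot f) H = s * t := by
    refine ⟨(Matrix.toLin b b M.adjugate) 1, ?_⟩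
    have h2' : Matrix.toLin b b M = Algebra.lmul (Polynomial F) (AdjoinRoot f) s := by
      rw [hM, Algebra.leftMulMatrix_apply, Matrix.toLin_toMatrix]
    calc algebraMap (Polynomial F) (AdjoinRoot f) H = H • 1 := Algebra.algebraMap_eq_smul_one H
      _ = (Matrix.toLin b b (M * M.adjugate)) 1 := by
          rw [Matrix.mul_adjugate, map_smul, Matrix.toLin_one]
          rfl
      _ = (Matrix.toLin b b M) ((Matrix.toLin b b M.adjugate) 1) := by
          rw [Matrix.toLin_mul b b b]; rfl
      _ = s * ((Matrix.toLin b b M.adjugate) 1) := by rw [h2']; rfl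
  -- vanishing of H at solutions
  have hroot : ∀ z0 x0 : F, z0 ^ d - c1 * x0 ^ d = c2 →
      (z0 + 1) ^ d - c3 * (x0 + c4) ^ d = c5 → H.eval x0 = 0 := by
    intro z0 x0 e1 e2
    have hfz : f.eval₂ (Polynomial.evalRingHom x0) z0 = 0 := by
      rw [hf, hA]
      simp only [eval₂_sub, eval₂_X_pow, eval₂_C, coe_evalRingHom, eval_add, eval_mul, eval_C,
        eval_pow, eval_X]
      linear_combination e1
    obtain ⟨t, ht⟩ := hdvdH
    have hev := congrArg (AdjoinRoot.lift (Polynomial.evalRingHom x0) z0 hfz) ht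
    rw [AdjoinRoot.algebraMap_eq, AdjoinRoot.lift_of, map_mul, hs, AdjoinRoot.lift_mk] at hev
    have hgz : g.eval₂ (Polynomial.evalRingHom x0) z0 = 0 := by
      rw [hg, hB]
      simp only [eval₂_sub, eval₂_pow, eval₂_add, eval₂_X, eval₂_one, eval₂_C, coe_evalRingHom,
        eval_add, eval_mul, eval_C, eval_pow, eval_X]
      linear_combination e2
    rw [hgz, zero_mul] at hev
    simpa using hev
  -- degree bound for H
  have hABdeg : (A - B).natDegree ≤ d := by
    refine (natDegree_sub_le _ _).trans ?_
    simp only [sup_le_iff]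
    refine ⟨hAdeg.le, ?_⟩
    rw [hB, natDegree_add_C]
    refine (natDegree_C_mul_le _ _).trans ?_
    rw [natDegree_pow, natDegree_X_add_C, mul_one]
  have hXmod0 : ∀ m i : ℕ, m < d →
      ((((X : (Polynomial F)[X]) ^ m) %ₘ f).coeff i).natDegree = 0 := by
    intro m i hm
    rw [hf, aux_modpow hd0 (by omega) A, if_pos hm, coeff_X_pow]
    split <;> simp
  have hXmodb : ∀ m i : ℕ, m < 2 * d →
      ((((X : (Polynomial F)[X]) ^ m) %ₘ f).coeff i).natDegree ≤ d := by
    intro m i hm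
    rw [hf, aux_modpow hd0 hm A]
    split
    · rw [coeff_X_pow]
      split <;> simp
    · rw [coeff_C_mul, coeff_X_pow]
      split
      · rw [mul_one]; exact hAdeg.le
      · simp
  set g0 : (Polynomial F)[X] := C (A - B) + ((X + 1) ^ d - X ^ d) with hg0
  have hgf : g = f + g0 := by
    rw [hg, hf, hg0, map_sub]
    ring
  have hsg0 : s = AdjoinRoot.mk f g0 := by
    rw [hs, hgf, map_add, AdjoinRoot.mk_self, zero_add]
  have hentry : ∀ i j : Fin f.natDegree, (M i j).natDegree ≤ d := by
    intro i j
    have hjd : (j : ℕ) < d := hfdeg ▸ j.isLt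
    have hbj : b j = AdjoinRoot.root f ^ (j : ℕ) := by
      rw [hb]
      exact (pb.basis_eq_pow j).trans (congrArg (· ^ (j : ℕ))
        (by rw [AdjoinRoot.powerBasis'_gen] : (AdjoinRoot.powerBasis' hmono).gen = AdjoinRoot.root f))
    have hrepr : M i j = ((g0 * X ^ (j : ℕ)) %ₘ f).coeff i := by
      rw [hM]
      refine (Algebra.leftMulMatrix_eq_repr_mul b s i j).trans ?_
      rw [hbj, hsg0, ← AdjoinRoot.mk_X (f := f),
        ← map_pow, ← map_mul, hb]
      exact AdjoinRoot.powerBasisAux'_repr_apply_to_fun hmono ((AdjoinRoot.mk f) (g0 * X ^ (j : ℕ))) i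
    rw [hrepr]
    have hexp : g0 * X ^ (j : ℕ) = (A - B) • X ^ (j : ℕ)
        + ∑ k ∈ Finset.range d, (d.choose k : Polynomial F) • X ^ (k + (j : ℕ)) := by
      rw [hg0, aux_binom d, add_mul, Finset.sum_mul, ← smul_eq_C_mul]
      simp only [smul_mul_assoc, ← pow_add]
    rw [hexp, add_modByMonic, smul_modByMonic]
    have hsum : (∑ k ∈ Finset.range d, (d.choose k : Polynomial F) • X ^ (k + (j : ℕ))) %ₘ f
        = ∑ k ∈ Finset.range d, (d.choose k : Polynomial F) • ((X : (Polynomial F)[X]) ^ (k + (j : ℕ)) %ₘ f) := by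
      rw [← modByMonicHom_apply, map_sum]
      simp only [modByMonicHom_apply, smul_modByMonic]
    rw [hsum, coeff_add, finset_sum_coeff]
    refine (natDegree_add_le _ _).trans (max_le ?_ ?_)
    · rw [coeff_smul, smul_eq_mul]
      refine natDegree_mul_le.trans ?_
      have h0 := hXmod0 (j : ℕ) (i : ℕ) hjd
      omega
    · refine natDegree_sum_le_of_forall_le _ _ fun k hk => ?_
      rw [coeff_smul, smul_eq_mul]
      refine natDegree_mul_le.trans ?_
      have hb' := hXmodb (k + (j : ℕ)) (i : ℕ) (by simp only [Finset.mem_range] at hk; omega)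
      simp only [natDegree_natCast]
      omega
  have hHdeg : H.natDegree ≤ d ^ 2 := by
    have hcard : Fintype.card (Fin pb.dim) * d = d ^ 2 := by
      rw [Fintype.card_fin]
      rw [show pb.dim = f.natDegree from rfl, hfdeg]
      ring
    rw [hH]
    exact (aux_det_bound M d hentry).trans_eq hcard
  -- counting
  set rs : Finset F := H.roots.toFinset with hrs
  have hmem : ∀ zx : F × F, (zx.1 ^ d - c1 * zx.2 ^ d = c2 ∧
      (zx.1 + 1) ^ d - c3 * (zx.2 + c4) ^ d = c5) → zx.2 ∈ rs := by
    intro zx hzx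
    rw [hrs, Multiset.mem_toFinset, mem_roots hH0]
    exact hroot _ _ hzx.1 hzx.2
  calc Nat.card {zx : F × F // zx.1 ^ d - c1 * zx.2 ^ d = c2 ∧
        (zx.1 + 1) ^ d - c3 * (zx.2 + c4) ^ d = c5}
      ≤ Nat.card {x : F // x ∈ rs} := by
        refine Nat.card_le_card_of_injective
          (fun zx => ⟨zx.1.2, hmem zx.1 zx.2⟩) ?_
        rintro ⟨⟨za, xa⟩, ha⟩ ⟨⟨zb, xb⟩, hb'⟩ hab
        simp only [Subtype.mk.injEq] at hab
        subst hab
        simp only [Subtype.mk.injEq, Prod.mk.injEq]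
        have hzz : za ^ d = zb ^ d := by linear_combination ha.1 - hb'.1
        exact ⟨aux_pow_inj hd0.ne' hgcd hzz, trivial⟩
    _ = rs.card := Nat.card_eq_finsetCard rs
    _ ≤ Multiset.card H.roots := Multiset.toFinset_card_le _
    _ ≤ H.natDegree := card_roots' H
    _ ≤ d ^ 2 := hHdeg
end

section
/- Let F_q be a finite field of characteristic p, let c ∈ F_q be nonzero, and let d > 1 with gcd(d, q-1) = 1 and p ∤ d. Then for all nonzero a, b ∈ F_q, the number of pairs (x, y) ∈ F_q² satisfying (x+y)^d - c·x^d = b and c·(x+y+a)^d - (x+a)^d = c·b is at most d². In other words, the c-boomerang uniformity of x^d is at most d². -/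
open Polynomial Matrix

section BM

variable {R : Type*} [CommRing R]

/-- Companion-type matrix of `z^d - α`. -/
def bmComp (d : ℕ) (α : R) : Matrix (Fin d) (Fin d) R :=
  Matrix.of fun i j => if (i : ℕ) = (j : ℕ) + 1 then 1
    else if (j : ℕ) = d - 1 ∧ (i : ℕ) = 0 then α else 0

/-- Powers of the companion matrix. -/
def bmS (d : ℕ) (α : R) (t : ℕ) : Matrix (Fin d) (Fin d) R :=
  Matrix.of fun i j => if (i : ℕ) = (j : ℕ) + t then 1
    else if (i : ℕ) + d = (j : ℕ) + t then α else 0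

open Finset in
lemma bmComp_pow (d : ℕ) (α : R) : ∀ t, t ≤ d → (bmComp d α) ^ t = bmS d α t := by
  intro t
  induction t with
  | zero =>
    intro _
    ext i j
    simp only [pow_zero, bmS, Matrix.of_apply, Matrix.one_apply, Nat.add_zero]
    have hj := j.isLt
    rcases eq_or_ne i j with h | h
    · simp [h]
    · have : (i : ℕ) ≠ (j : ℕ) := fun hc => h (Fin.ext hc)
      rw [if_neg h, if_neg this, if_neg (show ¬((i : ℕ) + d = (j : ℕ)) by omega)]
  | succ t ih =>
    intro ht
    have ht' : t ≤ d := Nat.le_of_succ_le ht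
    rw [pow_succ', ih ht']
    ext i j
    have hd0 : 0 < d := lt_of_lt_of_le (Nat.succ_pos t) ht
    have hj := j.isLt
    have hi := i.isLt
    rw [Matrix.mul_apply]
    rcases Nat.eq_zero_or_pos (i : ℕ) with hi0 | hipos
    · -- row 0 of bmComp : only entry at column d-1, value α
      have hl0 : ((⟨d - 1, by omega⟩ : Fin d) : ℕ) = d - 1 := rfl
      rw [Finset.sum_eq_single (⟨d - 1, by omega⟩ : Fin d)]
      · simp only [bmComp, bmS, Matrix.of_apply, hl0]
        rw [if_neg (by omega), if_pos (by exact ⟨trivial, hi0⟩)]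
        have h2 : ¬ ((d - 1 : ℕ) + d = (j : ℕ) + t) := by omega
        rcases Nat.decEq (d - 1) ((j : ℕ) + t) with h1 | h1
        · rw [if_neg h1, if_neg h2, mul_zero, if_neg (by omega), if_neg (by omega)]
        · rw [if_pos h1, mul_one, if_neg (by omega), if_pos (by omega)]
      · intro l _ hl
        simp only [bmComp, Matrix.of_apply]
        have hlv : (l : ℕ) ≠ d - 1 := by
          intro hc; exact hl (Fin.ext (by rw [hl0, ← hc]))
        rw [if_neg (by omega), if_neg (by tauto), zero_mul]
      · intro h; exact absurd (Finset.mem_univ _) h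
    · -- row i ≥ 1 : only entry at column i-1, value 1
      have hl0 : ((⟨(i : ℕ) - 1, by omega⟩ : Fin d) : ℕ) = (i : ℕ) - 1 := rfl
      rw [Finset.sum_eq_single (⟨(i : ℕ) - 1, by omega⟩ : Fin d)]
      · simp only [bmComp, bmS, Matrix.of_apply, hl0]
        rw [if_pos (by omega), one_mul]
        rcases Nat.decEq ((i : ℕ) - 1) ((j : ℕ) + t) with h1 | h1
        · rw [if_neg h1]
          rcases Nat.decEq ((i : ℕ) - 1 + d) ((j : ℕ) + t) with h2 | h2
          · rw [if_neg h2, if_neg (by omega), if_neg (by omega)]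
          · rw [if_pos h2, if_neg (by omega), if_pos (by omega)]
        · rw [if_pos h1, if_pos (by omega)]
      · intro l _ hl
        simp only [bmComp, Matrix.of_apply]
        have hlv : (i : ℕ) ≠ (l : ℕ) + 1 := by
          intro hc
          apply hl
          apply Fin.ext
          rw [hl0]
          omega
        rw [if_neg hlv, if_neg (by omega), zero_mul]
      · intro h; exact absurd (Finset.mem_univ _) h

end BM
section BM2
variable {R : Type*} [CommRing R]
variable {R : Type*} [CommRing R]

/-- The key matrix. -/
def bmN (d : ℕ) (α aa B : R) : Matrix (Fin d) (Fin d) R :=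
  (bmComp d α + aa • 1) ^ d - B • 1

open Finset in
lemma bm_vecMul_comp {d : ℕ} (hd : 0 < d) {α v : R} (hv : v ^ d = α) :
    (fun i : Fin d => v ^ (i : ℕ)) ᵥ* bmComp d α = v • fun i : Fin d => v ^ (i : ℕ) := by
  funext j
  have hj := j.isLt
  simp only [Matrix.vecMul, dotProduct, Pi.smul_apply, smul_eq_mul]
  rcases Nat.decEq (j : ℕ) (d - 1) with hjd | hjd
  · -- ordinary column : single entry at i = j+1
    have hl0 : ((⟨(j : ℕ) + 1, by omega⟩ : Fin d) : ℕ) = (j : ℕ) + 1 := rfl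
    rw [Finset.sum_eq_single (⟨(j : ℕ) + 1, by omega⟩ : Fin d)]
    · simp only [bmComp, Matrix.of_apply, hl0]
      rw [if_pos trivial, mul_one, ← pow_succ']
    · intro l _ hl
      simp only [bmComp, Matrix.of_apply]
      have : (l : ℕ) ≠ (j : ℕ) + 1 := by
        intro hc; exact hl (Fin.ext (by rw [hl0, ← hc]))
      rw [if_neg this, if_neg (by tauto), mul_zero]
    · intro h; exact absurd (Finset.mem_univ _) h
  · -- last column : single entry at i = 0, value α
    have hl0 : ((⟨0, hd⟩ : Fin d) : ℕ) = 0 := rfl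
    rw [Finset.sum_eq_single (⟨0, hd⟩ : Fin d)]
    · simp only [bmComp, Matrix.of_apply, hl0]
      rw [if_neg (by omega), if_pos ⟨hjd, trivial⟩, pow_zero, one_mul, ← hv,
        show (j : ℕ) = d - 1 from hjd, ← pow_succ']
      congr 1
      omega
    · intro l _ hl
      simp only [bmComp, Matrix.of_apply]
      have : (l : ℕ) ≠ 0 := by
        intro hc; exact hl (Fin.ext (by rw [hl0, ← hc]))
      rw [if_neg (by omega), if_neg (by tauto), mul_zero]
    · intro h; exact absurd (Finset.mem_univ _) h

lemma bm_vecMul_N {d : ℕ} (hd : 0 < d) {α v : R} (aa B : R) (hv : v ^ d = α) :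
    (fun i : Fin d => v ^ (i : ℕ)) ᵥ* bmN d α aa B
      = ((v + aa) ^ d - B) • fun i : Fin d => v ^ (i : ℕ) := by
  set w : Fin d → R := fun i : Fin d => v ^ (i : ℕ) with hw
  have hsm : ∀ (x : R), w ᵥ* (x • (1 : Matrix (Fin d) (Fin d) R)) = x • w := by
    intro x
    rw [Matrix.smul_one_eq_diagonal]
    funext j
    rw [Matrix.vecMul_diagonal]
    simp [mul_comm]
  have h1 : w ᵥ* (bmComp d α + aa • 1) = (v + aa) • w := by
    rw [Matrix.vecMul_add, bm_vecMul_comp hd hv, hsm, add_smul]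
  have h2 : ∀ k : ℕ, w ᵥ* (bmComp d α + aa • 1) ^ k = ((v + aa) ^ k) • w := by
    intro k
    induction k with
    | zero => simp
    | succ k ih =>
      rw [pow_succ, ← Matrix.vecMul_vecMul, ih, Matrix.smul_vecMul, h1, smul_smul, pow_succ]
  rw [bmN, Matrix.vecMul_sub, h2 d, hsm, sub_smul]

variable {S : Type*} [CommRing S]

lemma bmComp_map (d : ℕ) (α : R) (f : R →+* S) :
    (bmComp d α).map f = bmComp d (f α) := by
  ext i j
  simp only [bmComp, Matrix.map_apply, Matrix.of_apply, apply_ite f, _root_.map_one, _root_.map_zero]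

lemma bm_smul_one_map (d : ℕ) (x : R) (f : R →+* S) :
    ((x • (1 : Matrix (Fin d) (Fin d) R)).map f) = f x • (1 : Matrix (Fin d) (Fin d) S) := by
  rw [Matrix.smul_one_eq_diagonal, Matrix.diagonal_map (map_zero f),
    Matrix.smul_one_eq_diagonal]

lemma bmN_map (d : ℕ) (α aa B : R) (f : R →+* S) :
    (bmN d α aa B).map f = bmN d (f α) (f aa) (f B) := by
  have h := f.mapMatrix (m := Fin d)
  have : (bmN d α aa B).map f = f.mapMatrix (bmN d α aa B) := rfl
  rw [this, bmN, map_sub, map_pow, map_add]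
  have e1 : f.mapMatrix (bmComp d α) = bmComp d (f α) := bmComp_map d α f
  have e2 : f.mapMatrix (aa • (1 : Matrix (Fin d) (Fin d) R)) = f aa • 1 :=
    bm_smul_one_map d aa f
  have e3 : f.mapMatrix (B • (1 : Matrix (Fin d) (Fin d) R)) = f B • 1 :=
    bm_smul_one_map d B f
  rw [e1, e2, e3, bmN]

end BM2
section BM3
variable {F : Type*} [CommRing F]

open Finset in
lemma bmN_entry_natDegree_le (d n : ℕ) (α B : Polynomial F) (a0 : F)
    (hα : α.natDegree ≤ n) (hB : B.natDegree ≤ n) (i j : Fin d) :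
    ((bmN d α (C a0) B) i j).natDegree ≤ n := by
  have hcomm : Commute (bmComp d α) ((C a0) • (1 : Matrix (Fin d) (Fin d) (Polynomial F))) := by
    show _ * _ = _ * _
    rw [mul_smul_comm, smul_mul_assoc, mul_one, one_mul]
  rw [bmN, hcomm.add_pow']
  have hterm : ∀ m ∈ antidiagonal d,
      Nat.choose d m.1 • (bmComp d α ^ m.1 * (C a0 • (1:Matrix (Fin d) (Fin d) (Polynomial F))) ^ m.2)
        = Nat.choose d m.1 • ((C (a0 ^ m.2)) • bmS d α m.1) := by
    intro m hm
    have hm1 : m.1 ≤ d := by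
      have := (Finset.HasAntidiagonal.mem_antidiagonal.mp hm); omega
    rw [bmComp_pow d α m.1 hm1, _root_.smul_pow, one_pow, mul_smul_comm, mul_one, C_pow]
  rw [Finset.sum_congr rfl hterm, Matrix.sub_apply, Matrix.sum_apply]
  apply le_trans (Polynomial.natDegree_sub_le _ _)
  apply max_le
  · apply Polynomial.natDegree_sum_le_of_forall_le
    intro m _
    simp only [Matrix.smul_apply, nsmul_eq_mul, smul_eq_mul]
    apply le_trans (Polynomial.natDegree_mul_le)
    rw [Polynomial.natDegree_natCast, zero_add]
    apply le_trans (Polynomial.natDegree_mul_le)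
    rw [Polynomial.natDegree_C, zero_add]
    simp only [bmS, Matrix.of_apply]
    split_ifs
    · simp
    · exact hα
    · simp
  · simp only [Matrix.smul_apply, smul_eq_mul, Matrix.one_apply]
    split_ifs
    · simpa using hB
    · simp

open Finset in
lemma bm_natDegree_det_le {d n : ℕ} (M : Matrix (Fin d) (Fin d) (Polynomial F))
    (h : ∀ i j, (M i j).natDegree ≤ n) : M.det.natDegree ≤ d * n := by
  rw [Matrix.det_apply]
  apply Polynomial.natDegree_sum_le_of_forall_le
  intro σ _
  rw [Units.smul_def, zsmul_eq_mul]
  apply le_trans (Polynomial.natDegree_mul_le)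
  rw [Polynomial.natDegree_intCast, zero_add]
  apply le_trans (Polynomial.natDegree_prod_le _ _)
  calc ∑ i : Fin d, (M (σ i) i).natDegree ≤ ∑ _i : Fin d, n := by
        apply Finset.sum_le_sum; intro i _; exact h _ _
    _ = d * n := by simp [Finset.sum_const, mul_comm]
end BM3

section BM4

open Finset

set_option maxHeartbeats 1000000 in
theorem bm_det_ne_zero (F : Type*) [Field F] (p : ℕ) [CharP F p] (c : F) (hc : c ≠ 0)
    (d : ℕ) (hd : 1 < d) (hpd : ¬ p ∣ d) (a b : F) (ha : a ≠ 0) (hb : b ≠ 0) :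
    (bmN d (C c * X ^ d + C b) (C a) (C c⁻¹ * (X + C a) ^ d + C b)).det ≠ 0 := by
  classical
  have hd0 : 0 < d := by omega
  have hdF : (d : F) ≠ 0 := by
    rw [Ne, CharP.cast_eq_zero_iff F p d]; exact hpd
  set g : F[X] := C c * X ^ d + C b with hg
  set Bp : F[X] := C c⁻¹ * (X + C a) ^ d + C b with hBp
  set K := FractionRing (Polynomial F)
  set φ : Polynomial F →+* K := algebraMap (Polynomial F) K with hφ
  have hφinj : Function.Injective φ := IsFractionRing.injective (Polynomial F) K
  intro hdet0
  have h1 : (bmN d (φ g) (φ (C a)) (φ Bp)).det = 0 := by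
    rw [← bmN_map, ← RingHom.mapMatrix_apply, ← RingHom.map_det, hdet0, map_zero]
  set Ab : K := φ g with hAb
  set ab : K := φ (C a) with hab
  set Bb : K := φ Bp with hBb
  -- basic nonvanishing facts
  have hgne : g ≠ 0 := by
    intro h
    have hco : g.coeff 0 = b := by
      rw [hg, coeff_add, coeff_C_mul, coeff_X_pow, if_neg (by omega : ¬ (0 = d)),
        mul_zero, zero_add, coeff_C_zero]
    rw [h, coeff_zero] at hco
    exact hb hco.symm
  have hAb0 : Ab ≠ 0 := fun h => hgne (hφinj (by simpa using h))
  have hab0 : ab ≠ 0 := fun h => ha (by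
    have : (C a : F[X]) = 0 := hφinj (by simpa using h)
    simpa using this)
  have hdK : (d : K) ≠ 0 := by
    intro h
    have h2 : ((d : ℕ) : F[X]) = 0 := hφinj (by rw [map_natCast φ d, map_zero]; exact h)
    have h3 : (C ((d : ℕ) : F) : F[X]) = 0 := by
      rw [map_natCast (C : F →+* F[X]) d]; exact h2
    exact hdF (by rwa [Polynomial.C_eq_zero] at h3)
  -- kernel vector
  obtain ⟨w, hw0, hww⟩ := Matrix.exists_mulVec_eq_zero_iff.mpr h1
  -- polynomials over K
  set f : K[X] := X ^ d - C Ab with hf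
  have hfm : f.Monic := monic_X_pow_sub_C _ (by omega)
  have hfne : f ≠ 0 := hfm.ne_zero
  have hfdeg : f.natDegree = d := natDegree_X_pow_sub_C
  set g₂ : K[X] := (X + C ab) ^ d - C Bb with hg₂
  have hXCm : ((X + C ab) ^ d).Monic := (monic_X_add_C ab).pow d
  have hXCnd : ((X + C ab) ^ d).natDegree = d := by
    rw [natDegree_pow, natDegree_X_add_C, mul_one]
  have hXCdeg : ((X + C ab) ^ d).degree = ((d : ℕ) : WithBot ℕ) := by
    rw [Polynomial.degree_eq_natDegree hXCm.ne_zero, hXCnd]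
  have hCBblt : (C Bb).degree < ((X + C ab) ^ d).degree := by
    rw [hXCdeg]
    apply lt_of_le_of_lt degree_C_le
    exact_mod_cast Nat.cast_lt.mpr hd0
  have hg₂m : g₂.Monic := by
    rw [hg₂, sub_eq_add_neg]
    apply hXCm.add_of_left
    rw [degree_neg]
    exact hCBblt
  have hg₂deg : g₂.natDegree = d := by
    have hdeg : g₂.degree = (d : ℕ) := by
      rw [hg₂, degree_sub_eq_left_of_degree_lt hCBblt, hXCdeg]
    exact natDegree_eq_of_degree_eq_some hdeg
  -- f divides g₂ * W
  set Qa := AdjoinRoot f with hQa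
  set θ : Qa := AdjoinRoot.root f with hθdef
  set ψ : K →+* Qa := algebraMap K Qa with hψ
  have hθ : θ ^ d = ψ Ab := by
    have h0 : Polynomial.aeval θ f = 0 := by
      rw [AdjoinRoot.aeval_eq, AdjoinRoot.mk_self]
    have h1 := (congrArg (Polynomial.aeval θ) hf).symm.trans h0
    simp only [map_sub, map_pow, Polynomial.aeval_X, Polynomial.aeval_C] at h1
    rw [sub_eq_zero] at h1; exact h1
  have key := bm_vecMul_N (R := Qa) hd0 (ψ ab) (ψ Bb) hθ
  set gθ : Qa := (θ + ψ ab) ^ d - ψ Bb with hgθ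
  have hcol : ∀ j : Fin d, gθ * θ ^ (j : ℕ)
      = ∑ i : Fin d, ψ (bmN d Ab ab Bb i j) * θ ^ (i : ℕ) := by
    intro j
    have h2 := congrFun key j
    simp only [Matrix.vecMul, dotProduct, Pi.smul_apply, smul_eq_mul] at h2
    rw [← h2]
    apply Finset.sum_congr rfl
    intro i _
    rw [← bmN_map d Ab ab Bb ψ]
    simp [Matrix.map_apply, mul_comm]
  set W : K[X] := ∑ j : Fin d, C (w j) * X ^ (j : ℕ) with hW
  have hWcoeff : ∀ j₀ : Fin d, W.coeff (j₀ : ℕ) = w j₀ := by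
    intro j₀
    rw [hW, finset_sum_coeff]
    rw [Finset.sum_eq_single j₀]
    · simp [coeff_C_mul, coeff_X_pow]
    · intro l _ hl
      have : ((j₀ : ℕ) ≠ (l : ℕ)) := fun hc => hl (Fin.ext hc.symm)
      simp [coeff_C_mul, coeff_X_pow, this]
    · intro h; exact absurd (Finset.mem_univ _) h
  have hWne : W ≠ 0 := by
    obtain ⟨j₀, hj₀⟩ := Function.ne_iff.mp hw0
    intro hW0
    apply hj₀
    rw [← hWcoeff j₀, hW0]
    simp
  have hWdeg : W.degree < f.degree := by
    have hfd : f.degree = (d : ℕ) := degree_X_pow_sub_C hd0 _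
    rw [hfd]
    apply lt_of_le_of_lt (degree_sum_le _ _)
    rw [Finset.sup_lt_iff (by exact_mod_cast WithBot.bot_lt_coe (d:ℕ))]
    intro j _
    apply lt_of_le_of_lt (degree_mul_le _ _)
    have h1 : (C (w j)).degree ≤ 0 := degree_C_le
    have h2 : ((X : K[X]) ^ (j : ℕ)).degree ≤ (j : ℕ) := degree_X_pow_le _
    calc (C (w j)).degree + ((X : K[X]) ^ (j:ℕ)).degree ≤ 0 + ((j : ℕ) : WithBot ℕ) :=
          add_le_add h1 h2
      _ = ((j : ℕ) : WithBot ℕ) := by rw [zero_add]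
      _ < ((d : ℕ) : WithBot ℕ) := by exact_mod_cast j.isLt
  have hfW : f ∣ g₂ * W := by
    rw [← AdjoinRoot.mk_eq_zero, _root_.map_mul]
    have hg₂θ : AdjoinRoot.mk f g₂ = gθ := by
      rw [← AdjoinRoot.aeval_eq, hg₂]
      simp only [map_sub, map_pow, map_add, Polynomial.aeval_X, Polynomial.aeval_C]
      rfl
    have hWθ : AdjoinRoot.mk f W = ∑ j : Fin d, ψ (w j) * θ ^ (j : ℕ) := by
      rw [← AdjoinRoot.aeval_eq, hW]
      rw [map_sum]
      apply Finset.sum_congr rfl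
      intro j _
      simp only [_root_.map_mul, map_pow, Polynomial.aeval_X, Polynomial.aeval_C]
      rfl
    rw [hg₂θ, hWθ, Finset.mul_sum]
    have hstep : ∀ j : Fin d, gθ * (ψ (w j) * θ ^ (j : ℕ))
        = ∑ i : Fin d, ψ (bmN d Ab ab Bb i j * w j) * θ ^ (i : ℕ) := by
      intro j
      rw [show gθ * (ψ (w j) * θ ^ (j : ℕ)) = ψ (w j) * (gθ * θ ^ (j : ℕ)) by ring,
        hcol j, Finset.mul_sum]
      apply Finset.sum_congr rfl
      intro i _
      rw [_root_.map_mul]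
      ring
    rw [Finset.sum_congr rfl fun j _ => hstep j, Finset.sum_comm]
    have : ∀ i : Fin d, ∑ j : Fin d, ψ (bmN d Ab ab Bb i j * w j) * θ ^ (i : ℕ) = 0 := by
      intro i
      rw [← Finset.sum_mul, ← map_sum]
      have : ∑ j : Fin d, bmN d Ab ab Bb i j * w j = 0 := by
        have := congrFun hww i
        simpa [Matrix.mulVec, dotProduct] using this
      rw [this, map_zero, zero_mul]
    rw [Finset.sum_congr rfl fun i _ => this i, Finset.sum_const_zero]
  -- coprimality
  by_cases hcop : IsCoprime f g₂
  · have hdvdW : f ∣ W := hcop.dvd_of_dvd_mul_left hfW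
    exact hWne (Polynomial.eq_zero_of_dvd_of_degree_lt hdvdW hWdeg)
  · -- common irreducible factor leads to contradiction
    have hgcdne : EuclideanDomain.gcd f g₂ ≠ 0 := fun h =>
      hfne (EuclideanDomain.gcd_eq_zero_iff.mp h).1
    have hnu : ¬ IsUnit (EuclideanDomain.gcd f g₂) := fun h =>
      hcop (EuclideanDomain.gcd_isUnit_iff.mp h)
    obtain ⟨h₁, h₁irr, h₁dvd⟩ := WfDvdMonoid.exists_irreducible_factor hnu hgcdne
    set h₂ := normalize h₁ with hh₂
    have hassoc : Associated h₁ h₂ := (normalize_associated h₁).symm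
    have h₂irr : Irreducible h₂ := hassoc.irreducible h₁irr
    have h₂m : h₂.Monic := monic_normalize h₁irr.ne_zero
    have h₂ne : h₂ ≠ 0 := h₂m.ne_zero
    have h₂f : h₂ ∣ f := dvd_trans (dvd_trans hassoc.symm.dvd h₁dvd)
      (EuclideanDomain.gcd_dvd_left f g₂)
    have h₂g₂ : h₂ ∣ g₂ := dvd_trans (dvd_trans hassoc.symm.dvd h₁dvd)
      (EuclideanDomain.gcd_dvd_right f g₂)
    -- m = natDegree h₂ satisfies d ∣ m via norms
    haveI := Fact.mk h₂irr
    set L := AdjoinRoot h₂ with hL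
    set β : L := AdjoinRoot.root h₂ with hβdef
    set pb := AdjoinRoot.powerBasis h₂ne with hpb
    haveI : Module.Finite K L := pb.finite
    haveI : Module.Free K L := Module.Free.of_basis pb.basis
    have hfinrank : Module.finrank K L = h₂.natDegree := by
      rw [pb.finrank, hpb, AdjoinRoot.powerBasis_dim]
    have hβd : β ^ d = algebraMap K L Ab := by
      obtain ⟨t, ht⟩ := h₂f
      have h0 : Polynomial.aeval β f = 0 := by
        rw [ht, _root_.map_mul]
        rw [show Polynomial.aeval β h₂ = 0 by rw [AdjoinRoot.aeval_eq, AdjoinRoot.mk_self]]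
        rw [zero_mul]
      have h1 := (congrArg (Polynomial.aeval β) hf).symm.trans h0
      simp only [map_sub, map_pow, Polynomial.aeval_X, Polynomial.aeval_C] at h1
      rwa [sub_eq_zero] at h1
    have hβ0 : β ≠ 0 := by
      intro h
      rw [h, zero_pow (by omega : d ≠ 0)] at hβd
      exact hAb0 ((algebraMap K L).injective (by rw [map_zero]; exact hβd.symm))
    set ρ : K := Algebra.norm K β with hρ
    have hρd : ρ ^ d = Ab ^ h₂.natDegree := by
      rw [hρ, ← map_pow, hβd, Algebra.norm_algebraMap, hfinrank]
    have hρ0 : ρ ≠ 0 := by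
      rw [hρ, Ne, Algebra.norm_eq_zero_iff]
      exact hβ0
    -- pull back to F[X]
    obtain ⟨Pn, Qd, hQmem, hPQ⟩ := IsFractionRing.div_surjective (A := Polynomial F) ρ
    have hQne : Qd ≠ 0 := nonZeroDivisors.ne_zero hQmem
    have hφQ : φ Qd ≠ 0 := fun h => hQne (hφinj (by simpa using h))
    have hPeq : Pn ^ d = g ^ h₂.natDegree * Qd ^ d := by
      apply hφinj
      have h2 : (φ Pn / φ Qd) ^ d = Ab ^ h₂.natDegree := by rw [hPQ]; exact hρd
      rw [div_pow] at h2
      rw [map_pow, _root_.map_mul, map_pow, map_pow]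
      rw [eq_comm, ← h2, div_mul_eq_mul_div, eq_comm, mul_comm, eq_div_iff (pow_ne_zero _ hφQ)]
      ring
    have hPne : Pn ≠ 0 := by
      intro h
      rw [h] at hPQ
      simp only [map_zero, zero_div] at hPQ
      exact hρ0 hPQ.symm
    -- pass to the algebraic closure
    set Om := AlgebraicClosure F with hOm
    have hrm : ∀ (q : Om[X]) (k : ℕ) (α : Om), q ≠ 0 →
        Polynomial.rootMultiplicity α (q ^ k) = k * Polynomial.rootMultiplicity α q := by
      intro q k α hq
      induction k with
      | zero => simp
      | succ k ih =>
        rw [pow_succ, Polynomial.rootMultiplicity_mul (by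
          exact mul_ne_zero (pow_ne_zero _ hq) hq), ih]
        ring
    set cb : Om := algebraMap F Om c with hcb
    set bb : Om := algebraMap F Om b with hbb
    have hcbne : cb ≠ 0 := fun h => hc ((algebraMap F Om).injective (by rw [map_zero]; exact h))
    have hbbne : bb ≠ 0 := fun h => hb ((algebraMap F Om).injective (by rw [map_zero]; exact h))
    set e : Om := -(bb / cb) with he
    have hene : e ≠ 0 := by
      rw [he, neg_ne_zero]
      exact div_ne_zero hbbne hcbne
    set gbar : Om[X] := g.map (algebraMap F Om) with hgbar
    have hsplit : gbar = C cb * (X ^ d - C e) := by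
      rw [hgbar, hg]
      rw [Polynomial.map_add, Polynomial.map_mul, Polynomial.map_pow, Polynomial.map_C,
        Polynomial.map_C, Polynomial.map_X]
      rw [mul_sub, ← C_mul, he]
      have : cb * -(bb / cb) = -bb := by
          rw [mul_neg, mul_div_assoc', mul_comm, mul_div_assoc, div_self hcbne, mul_one]
      rw [this, ← hcb, ← hbb]
      rw [map_neg, sub_neg_eq_add]
    have hgbarne : gbar ≠ 0 := by
      rw [hsplit]
      exact mul_ne_zero (by simpa using hcbne) (X_pow_sub_C_ne_zero hd0 e)
    -- a root of multiplicity one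
    obtain ⟨α, hα⟩ := IsAlgClosed.exists_root (X ^ d - C e : Om[X])
      (by rw [degree_X_pow_sub_C hd0]; exact_mod_cast (by omega : (d : ℕ) ≠ 0))
    have hsq : Squarefree (X ^ d - C e : Om[X]) := by
      apply Polynomial.Separable.squarefree
      exact Polynomial.separable_X_pow_sub_C' p d e hpd hene
    have hrm1 : Polynomial.rootMultiplicity α gbar = 1 := by
      rw [hsplit, Polynomial.rootMultiplicity_mul (by
        rw [← hsplit]; exact hgbarne), Polynomial.rootMultiplicity_C, zero_add]
      have hge1 : 1 ≤ Polynomial.rootMultiplicity α (X ^ d - C e : Om[X]) :=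
        (Polynomial.rootMultiplicity_pos (X_pow_sub_C_ne_zero hd0 e)).mpr hα
      have hle1 : Polynomial.rootMultiplicity α (X ^ d - C e : Om[X]) ≤ 1 := by
        by_contra h2
        push_neg at h2
        have hdvd2 : (X - C α) ^ 2 ∣ (X ^ d - C e : Om[X]) :=
          dvd_trans (pow_dvd_pow _ h2) (Polynomial.pow_rootMultiplicity_dvd _ _)
        have := hsq (X - C α) (by rwa [← sq])
        exact Polynomial.not_isUnit_X_sub_C α this
      omega
    -- root multiplicity count
    set Pbar : Om[X] := Pn.map (algebraMap F Om) with hPbar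
    set Qbar : Om[X] := Qd.map (algebraMap F Om) with hQbar
    have hPbarne : Pbar ≠ 0 := by
      rw [hPbar, Ne, Polynomial.map_eq_zero_iff (algebraMap F Om).injective]
      exact hPne
    have hQbarne : Qbar ≠ 0 := by
      rw [hQbar, Ne, Polynomial.map_eq_zero_iff (algebraMap F Om).injective]
      exact hQne
    have hmapeq : Pbar ^ d = gbar ^ h₂.natDegree * Qbar ^ d := by
      rw [hPbar, hQbar, hgbar, ← Polynomial.map_pow, ← Polynomial.map_pow, ← Polynomial.map_pow,
        ← Polynomial.map_mul, hPeq]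
    have hcount : d * Polynomial.rootMultiplicity α Pbar
        = h₂.natDegree + d * Polynomial.rootMultiplicity α Qbar := by
      have h2 := congrArg (Polynomial.rootMultiplicity α) hmapeq
      rw [hrm _ _ _ hPbarne, Polynomial.rootMultiplicity_mul (by
          exact mul_ne_zero (pow_ne_zero _ hgbarne) (pow_ne_zero _ hQbarne)),
        hrm _ _ _ hgbarne, hrm _ _ _ hQbarne, hrm1, mul_one] at h2
      omega
    have hdvdm : d ∣ h₂.natDegree := by
      have h4 : d ∣ d * Polynomial.rootMultiplicity α Pbar - d * Polynomial.rootMultiplicity α Qbar :=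
        Nat.dvd_sub ⟨_, rfl⟩ ⟨_, rfl⟩
      have h5 : h₂.natDegree = d * Polynomial.rootMultiplicity α Pbar
          - d * Polynomial.rootMultiplicity α Qbar := by omega
      rw [h5]; exact h4
    have hmpos : 0 < h₂.natDegree := h₂irr.natDegree_pos
    have hmle : h₂.natDegree ≤ d := hfdeg ▸ Polynomial.natDegree_le_of_dvd h₂f hfne
    have hmd : h₂.natDegree = d := le_antisymm hmle (Nat.le_of_dvd hmpos hdvdm)
    -- h₂ = f and h₂ = g₂
    have hmon_eq : ∀ q : K[X], q.Monic → q.natDegree = d → h₂ ∣ q → h₂ = q := by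
      intro q hqm hqd hdvd
      obtain ⟨t, ht⟩ := hdvd
      have htne : t ≠ 0 := by
        intro h; rw [h, mul_zero] at ht; exact hqm.ne_zero ht
      have hdegt : t.natDegree = 0 := by
        have := Polynomial.natDegree_mul h₂ne htne
        rw [← ht, hqd, hmd] at this
        omega
      have ht1 : t = 1 := by
        have hlc := congrArg Polynomial.leadingCoeff ht
        rw [Polynomial.leadingCoeff_mul, h₂m.leadingCoeff, one_mul, hqm.leadingCoeff] at hlc
        have hC := Polynomial.eq_C_of_natDegree_eq_zero hdegt
        rw [hC] at hlc ⊢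
        rw [Polynomial.leadingCoeff_C] at hlc
        rw [← hlc, Polynomial.C_1]
      rw [ht, ht1, mul_one]
    have hfeq : h₂ = f := hmon_eq f hfm hfdeg h₂f
    have hg₂eq : h₂ = g₂ := hmon_eq g₂ hg₂m hg₂deg h₂g₂
    have hfg₂ : f = g₂ := hfeq ▸ hg₂eq
    -- compare coefficients at d-1
    have hcoefff : f.coeff (d - 1) = 0 := by
      rw [hf, Polynomial.coeff_sub, Polynomial.coeff_X_pow, Polynomial.coeff_C,
        if_neg (by omega), if_neg (by omega), sub_zero]
    have hcoeffg₂ : g₂.coeff (d - 1) = ab * d := by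
      rw [hg₂, Polynomial.coeff_sub, Polynomial.coeff_C, if_neg (by omega), sub_zero,
        Polynomial.coeff_X_add_C_pow]
      have hch : d.choose (d - 1) = d := by
        rw [show d - 1 = d - (d - (d-1)) by omega]
        rw [Nat.choose_symm (by omega : d - (d-1) ≤ d), show d - (d-1) = 1 by omega,
          Nat.choose_one_right]
      rw [show d - (d - 1) = 1 by omega, pow_one, hch]
    rw [hfg₂, hcoeffg₂] at hcoefff
    rcases mul_eq_zero.mp hcoefff with h | h
    · exact hab0 h
    · exact hdK h

end BM4

theorem stmt7 (F : Type*) [Field F] [Fintype F] (p : ℕ) [CharP F p]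
    (c : F) (hc : c ≠ 0) (d : ℕ) (hd : 1 < d)
    (hgcd : Nat.gcd d (Fintype.card F - 1) = 1) (hpd : ¬ p ∣ d) :
    ∀ a b : F, a ≠ 0 → b ≠ 0 →
      Nat.card {xy : F × F //
        (xy.1 + xy.2) ^ d - c * xy.1 ^ d = b ∧
        c * (xy.1 + xy.2 + a) ^ d - (xy.1 + a) ^ d = c * b} ≤ d ^ 2 := by
  intro a b ha hb
  classical
  have hd0 : 0 < d := by omega
  -- injectivity of the d-th power map
  have hpow : ∀ z z' : F, z ^ d = z' ^ d → z = z' := by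
    intro z z' h
    by_cases hz : z = 0
    · subst hz
      rw [eq_comm]
      rw [zero_pow (by omega : d ≠ 0), eq_comm, pow_eq_zero_iff (by omega : d ≠ 0)] at h
      exact h
    by_cases hz' : z' = 0
    · subst hz'
      rw [zero_pow (by omega : d ≠ 0), pow_eq_zero_iff (by omega : d ≠ 0)] at h
      exact h
    have hcop : (Nat.card Fˣ).Coprime d := by
      rw [Nat.card_eq_fintype_card, Fintype.card_units]
      exact Nat.Coprime.symm hgcd
    have hinj := (powCoprime hcop).injective
    have hu : powCoprime hcop (Units.mk0 z hz) = powCoprime hcop (Units.mk0 z' hz') := by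
      apply Units.ext
      rw [powCoprime_apply, powCoprime_apply]
      simpa using h
    have := hinj hu
    have := congrArg Units.val this
    simpa using this
  -- the polynomial
  set A : F[X] := C c * X ^ d + C b with hA
  set Bpoly : F[X] := C c⁻¹ * (X + C a) ^ d + C b with hBpoly
  set N := bmN d A (C a) Bpoly with hN
  set Rp : F[X] := N.det with hRp
  have hRp0 : Rp ≠ 0 := bm_det_ne_zero F p c hc d hd hpd a b ha hb
  have hRdeg : Rp.natDegree ≤ d ^ 2 := by
    have hent : ∀ i j, (N i j).natDegree ≤ d := by
      intro i j
      apply bmN_entry_natDegree_le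
      · apply le_trans (natDegree_add_le _ _)
        apply max_le
        · apply le_trans (natDegree_C_mul_le _ _)
          rw [natDegree_X_pow]
        · simp
      · apply le_trans (natDegree_add_le _ _)
        apply max_le
        · apply le_trans (natDegree_C_mul_le _ _)
          apply le_trans (natDegree_pow_le)
          rw [natDegree_X_add_C, mul_one]
        · simp
    calc Rp.natDegree ≤ d * d := bm_natDegree_det_le N hent
      _ = d ^ 2 := (sq d).symm
  -- every solution gives a root of Rp
  have hroot : ∀ x y : F, ((x + y) ^ d - c * x ^ d = b) →
      (c * (x + y + a) ^ d - (x + a) ^ d = c * b) → Rp.IsRoot x := by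
    intro x y h1 h2
    set v : F := x + y with hv'
    have hvA : v ^ d = Polynomial.eval x A := by
      rw [hA]
      simp only [eval_add, eval_mul, eval_C, eval_pow, eval_X]
      linear_combination h1
    have hB : Polynomial.eval x Bpoly = (v + a) ^ d := by
      rw [hBpoly]
      simp only [eval_add, eval_mul, eval_C, eval_pow, eval_X]
      apply mul_left_cancel₀ hc
      rw [mul_add, ← mul_assoc, mul_inv_cancel₀ hc, one_mul]
      linear_combination -h2
    have hmap : N.map (Polynomial.evalRingHom x) = bmN d (eval x A) a (eval x Bpoly) := by
      rw [hN, bmN_map]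
      congr 1
      simp
    have hkey := bm_vecMul_N (R := F) hd0 a (eval x Bpoly) hvA
    have hzero : (fun i : Fin d => v ^ (i : ℕ)) ᵥ* (bmN d (eval x A) a (eval x Bpoly)) = 0 := by
      rw [hkey, hB]
      simp
    have hdet0 : (bmN d (eval x A) a (eval x Bpoly)).det = 0 := by
      apply Matrix.exists_vecMul_eq_zero_iff.mp
      refine ⟨_, ?_, hzero⟩
      intro hcontra
      have := congrFun hcontra ⟨0, hd0⟩
      simpa using this
    show eval x Rp = 0
    calc eval x Rp = ((Polynomial.evalRingHom x).mapMatrix N).det := by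
          rw [hRp, ← RingHom.map_det]; rfl
      _ = (N.map (Polynomial.evalRingHom x)).det := by rw [RingHom.mapMatrix_apply]
      _ = 0 := by rw [hmap, hdet0]
  -- counting
  set T := Rp.roots.toFinset with hT
  have hΦ : ∀ s : {xy : F × F //
        (xy.1 + xy.2) ^ d - c * xy.1 ^ d = b ∧
        c * (xy.1 + xy.2 + a) ^ d - (xy.1 + a) ^ d = c * b}, s.1.1 ∈ T := by
    intro s
    rw [hT, Multiset.mem_toFinset, Polynomial.mem_roots hRp0]
    exact hroot s.1.1 s.1.2 s.2.1 s.2.2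
  have hcard : Nat.card {xy : F × F //
        (xy.1 + xy.2) ^ d - c * xy.1 ^ d = b ∧
        c * (xy.1 + xy.2 + a) ^ d - (xy.1 + a) ^ d = c * b} ≤ Nat.card T := by
    apply Nat.card_le_card_of_injective (fun s => (⟨s.1.1, hΦ s⟩ : T))
    intro s t h
    have h1 : s.1.1 = t.1.1 := congrArg Subtype.val h
    have h2 : s.1.2 = t.1.2 := by
      have hs := s.2.1
      have ht := t.2.1
      have hsum : (s.1.1 + s.1.2) ^ d = (t.1.1 + t.1.2) ^ d := by
        rw [← sub_eq_zero]
        rw [← sub_eq_zero] at hs ht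
        rw [h1] at hs
        rw [← sub_eq_zero, h1]
        linear_combination hs - ht
      have := hpow _ _ hsum
      rw [h1] at this
      exact add_left_cancel this
    apply Subtype.ext
    exact Prod.ext h1 h2
  apply le_trans hcard
  rw [Nat.card_eq_finsetCard]
  calc T.card ≤ Multiset.card Rp.roots := Multiset.toFinset_card_le _
    _ ≤ Rp.natDegree := Polynomial.card_roots' Rp
    _ ≤ d ^ 2 := hRdeg
end

section
/- Let F_q be a finite field, let d > 1 with gcd(d, q-1) = 1, let a ∈ F_q be nonzero, and let c ∈ F_q be nonzero. Let F(x) = x^d with inverse F⁻¹. Then the number of x ∈ F_q satisfying F⁻¹(c⁻¹·F(x+a)) - F⁻¹(c·F(x)) = a equals 1 if c² ≠ 1, equals 0 if c = -1 (and -1 ≠ 1 in F_q), and equals q if c = 1. -/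
/-!
A right inverse `r` of `x ↦ x ^ d` that is also a left inverse is multiplicative, since
`r (b * x ^ d) = r b * x`. With `v = r c` the equation therefore becomes the linear equation
`v⁻¹ * (x + a) - v * x = a`, i.e. `(1 - v) * ((1 + v) * x + a) = 0`, and `v ^ d = c`.
If `c ^ 2 ≠ 1` then `v ≠ ±1` and there is exactly one root; if `c = 1` then `v = 1` and every
`x` is a root; if `c = -1 ≠ 1` then `v = -1` and the equation reads `2 * a = 0`, which has no root.
-/

section PowInverse

variable {M : Type*} {d : ℕ} {r : M → M}

theorem root_mul_pow [CommMonoid M] (hl : ∀ x, r (x ^ d) = x) (hr : ∀ x, r x ^ d = x)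
    (b x : M) : r (b * x ^ d) = r b * x := by
  rw [← hl (r b * x), mul_pow, hr]

theorem root_mul [CommMonoid M] (hl : ∀ x, r (x ^ d) = x) (hr : ∀ x, r x ^ d = x)
    (x y : M) : r (x * y) = r x * r y := by
  simpa only [hr] using root_mul_pow hl hr x (r y)

theorem root_one [Monoid M] (hl : ∀ x, r (x ^ d) = x) : r 1 = 1 := by
  simpa only [one_pow] using hl 1

theorem root_inv_mul_root [CommGroupWithZero M] (hl : ∀ x, r (x ^ d) = x)
    (hr : ∀ x, r x ^ d = x) {c : M} (hc : c ≠ 0) : r c⁻¹ * r c = 1 := by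
  rw [← root_mul hl hr, inv_mul_cancel₀ hc, root_one hl]

theorem root_inv [CommGroupWithZero M] (hl : ∀ x, r (x ^ d) = x) (hr : ∀ x, r x ^ d = x)
    {c : M} (hc : c ≠ 0) : r c⁻¹ = (r c)⁻¹ :=
  eq_inv_of_mul_eq_one_left (root_inv_mul_root hl hr hc)

theorem root_ne_zero [CommGroupWithZero M] (hl : ∀ x, r (x ^ d) = x) (hr : ∀ x, r x ^ d = x)
    {c : M} (hc : c ≠ 0) : r c ≠ 0 :=
  right_ne_zero_of_mul_eq_one (root_inv_mul_root hl hr hc)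

theorem root_neg_one [Field M] (hl : ∀ x, r (x ^ d) = x) (hr : ∀ x, r x ^ d = x)
    (hM : (-1 : M) ≠ 1) : r (-1) = -1 := by
  have hsq : r (-1) * r (-1) = 1 := by
    simpa only [inv_neg, inv_one] using root_inv_mul_root hl hr (neg_ne_zero.mpr one_ne_zero)
  have hne : r (-1) ≠ 1 := fun h => hM (by rw [← hr (-1), h, one_pow])
  exact (mul_self_eq_one_iff.mp hsq).resolve_left hne

end PowInverse

section LinearEquation

variable {F : Type*} [Field F] {a v : F}

theorem inv_mul_add_sub_mul_eq_iff (hv : v ≠ 0) (x : F) :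
    v⁻¹ * (x + a) - v * x = a ↔ (1 - v) * ((1 + v) * x + a) = 0 := by
  have key : (1 - v) * ((1 + v) * x + a) = v * (v⁻¹ * (x + a) - v * x - a) := by
    field_simp
    ring
  rw [key, mul_eq_zero, or_iff_right hv, sub_eq_zero]

theorem card_linear_eq_of_sq_ne_one (hv0 : v ≠ 0) (hv : v ^ 2 ≠ 1) :
    Nat.card {x : F // v⁻¹ * (x + a) - v * x = a} = 1 := by
  have h1 : 1 - v ≠ 0 := fun h => hv (by linear_combination (-1 - v) * h)
  have h2 : 1 + v ≠ 0 := fun h => hv (by linear_combination (v - 1) * h)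
  have hsol (x : F) : v⁻¹ * (x + a) - v * x = a ↔ x = -a / (1 + v) := by
    rw [inv_mul_add_sub_mul_eq_iff hv0, mul_eq_zero, or_iff_right h1, eq_div_iff h2]
    constructor <;> intro h <;> linear_combination h
  simp [hsol]

theorem card_linear_eq_of_eq_neg_one (ha : a ≠ 0) (hF : (-1 : F) ≠ 1) :
    Nat.card {x : F // (-1 : F)⁻¹ * (x + a) - -1 * x = a} = 0 := by
  have h2 : (2 : F) ≠ 0 := fun h => hF (by linear_combination -h)
  have hno : -a ≠ a := fun h =>
    ha ((mul_eq_zero.mp (by linear_combination -h : (2 : F) * a = 0)).resolve_left h2)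
  simp [hno]

theorem card_linear_eq_one [Fintype F] :
    Nat.card {x : F // (1 : F)⁻¹ * (x + a) - 1 * x = a} = Fintype.card F := by
  simp

end LinearEquation

theorem stmt11_general (F : Type*) [Field F] [Fintype F]
    (d : ℕ)
    (Finv : F → F) (hFinv1 : ∀ x : F, Finv (x ^ d) = x) (hFinv2 : ∀ x : F, (Finv x) ^ d = x)
    (a c : F) (ha : a ≠ 0) (hc : c ≠ 0) :
    (c ^ 2 ≠ 1 →
      Nat.card {x : F // Finv (c⁻¹ * (x + a) ^ d) - Finv (c * x ^ d) = a} = 1) ∧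
    (c = -1 → (-1 : F) ≠ 1 →
      Nat.card {x : F // Finv (c⁻¹ * (x + a) ^ d) - Finv (c * x ^ d) = a} = 0) ∧
    (c = 1 →
      Nat.card {x : F // Finv (c⁻¹ * (x + a) ^ d) - Finv (c * x ^ d) = a}
        = Fintype.card F) := by
  set v := Finv c with hv
  have hcard : Nat.card {x : F // Finv (c⁻¹ * (x + a) ^ d) - Finv (c * x ^ d) = a} =
      Nat.card {x : F // v⁻¹ * (x + a) - v * x = a} := by
    refine Nat.card_congr (Equiv.subtypeEquivRight fun x => ?_)
    rw [root_mul_pow hFinv1 hFinv2, root_mul_pow hFinv1 hFinv2, root_inv hFinv1 hFinv2 hc]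
  rw [hcard]
  refine ⟨fun hc2 => ?_, fun hc1 hF => ?_, fun hc1 => ?_⟩
  · refine card_linear_eq_of_sq_ne_one (root_ne_zero hFinv1 hFinv2 hc) fun hv2 => hc2 ?_
    rw [← hFinv2 c, ← hv, ← pow_mul, mul_comm, pow_mul, hv2, one_pow]
  · rw [hv, hc1, root_neg_one hFinv1 hFinv2 hF]
    exact card_linear_eq_of_eq_neg_one ha hF
  · rw [hv, hc1, root_one hFinv1]
    exact card_linear_eq_one

theorem stmt11 (F : Type*) [Field F] [Fintype F]
    (d : ℕ) (hd : 1 < d) (hgcd : Nat.gcd d (Fintype.card F - 1) = 1)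
    (Finv : F → F) (hFinv1 : ∀ x : F, Finv (x ^ d) = x) (hFinv2 : ∀ x : F, (Finv x) ^ d = x)
    (a c : F) (ha : a ≠ 0) (hc : c ≠ 0) :
    (c ^ 2 ≠ 1 →
      Nat.card {x : F // Finv (c⁻¹ * (x + a) ^ d) - Finv (c * x ^ d) = a} = 1) ∧
    (c = -1 → (-1 : F) ≠ 1 →
      Nat.card {x : F // Finv (c⁻¹ * (x + a) ^ d) - Finv (c * x ^ d) = a} = 0) ∧
    (c = 1 →
      Nat.card {x : F // Finv (c⁻¹ * (x + a) ^ d) - Finv (c * x ^ d) = a}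
        = Fintype.card F) :=
  stmt11_general F d Finv hFinv1 hFinv2 a c ha hc
end

section
/- Let F_q be a finite field, let c ∈ F_q be nonzero, let d > 1 with gcd(d, q-1) = 1, and let e be the inverse of d modulo q-1. Then for Δx, Δy ∈ F_q, the number of x ∈ F_q with (x + Δx)^e - c·x^e = Δy equals the number of x ∈ F_q with (x + c⁻¹·Δy)^d - c^{-d}·x^d = c^{-d}·Δx. -/
theorem stmt12 (F : Type*) [Field F] [Fintype F]
    (c : F) (hc : c ≠ 0) (d : ℕ) (hd : 1 < d)
    (hgcd : Nat.gcd d (Fintype.card F - 1) = 1)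
    (e : ℕ) (he1 : 1 ≤ e) (he2 : e < Fintype.card F - 1)
    (hed : e * d ≡ 1 [MOD Fintype.card F - 1])
    (Δx Δy : F) :
    Nat.card {x : F // (x + Δx) ^ e - c * x ^ e = Δy}
      = Nat.card {x : F // (x + c⁻¹ * Δy) ^ d - c⁻¹ ^ d * x ^ d = c⁻¹ ^ d * Δx} := by
  have hq : 2 ≤ Fintype.card F - 1 := lt_of_le_of_lt he1 he2
  have key : ∀ a : F, (a ^ e) ^ d = a := by
    intro a
    rcases eq_or_ne a 0 with rfl | ha
    · rw [zero_pow (by omega), zero_pow (by omega)]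
    · rw [← pow_mul]
      have hdm := Nat.div_add_mod (e * d) (Fintype.card F - 1)
      have h1 : (e * d) % (Fintype.card F - 1) = 1 := by
        have h := hed
        rwa [Nat.ModEq, Nat.one_mod_eq_one.mpr (by omega)] at h
      rw [h1] at hdm
      obtain ⟨k, hk⟩ : ∃ k, e * d = (Fintype.card F - 1) * k + 1 :=
        ⟨e * d / (Fintype.card F - 1), by omega⟩
      rw [hk, pow_add, pow_mul, FiniteField.pow_card_sub_one_eq_one a ha, one_pow,
        one_mul, pow_one]
  have key2 : ∀ a : F, (a ^ d) ^ e = a := by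
    intro a; rw [← pow_mul, mul_comm, pow_mul, key]
  apply Nat.card_congr
  refine ⟨fun x => ⟨x.1 ^ e, ?_⟩, fun t => ⟨t.1 ^ d, ?_⟩, ?_, ?_⟩
  · obtain ⟨x, hx⟩ := x
    have h1 : (x + Δx) ^ e = c * x ^ e + Δy := by linear_combination hx
    have h2 : x ^ e + c⁻¹ * Δy = c⁻¹ * (x + Δx) ^ e := by
      rw [h1]
      field_simp
    simp only
    rw [h2, mul_pow, key x, key (x + Δx)]
    ring
  · obtain ⟨t, ht⟩ := t
    have h3 : (t + c⁻¹ * Δy) ^ d = c⁻¹ ^ d * (t ^ d + Δx) := by linear_combination ht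
    have h1 : (c * t + Δy) ^ d = t ^ d + Δx := by
      have h2 : (c * t + Δy) ^ d = c ^ d * (t + c⁻¹ * Δy) ^ d := by
        rw [← mul_pow, mul_add, mul_inv_cancel_left₀ hc]
      rw [h2, h3, ← mul_assoc, ← mul_pow, mul_inv_cancel₀ hc, one_pow, one_mul]
    simp only
    rw [← h1, key2 (c * t + Δy), key2 t]
    ring
  · intro x
    exact Subtype.ext (key x.1)
  · intro t
    exact Subtype.ext (key2 t.1)
end

section
/- Let F_q be a finite field, let c ∈ F_q be nonzero, let d > 1 with gcd(d, q-1) = 1, and let e be the inverse of d modulo q-1. Let a, b ∈ F_q. Then the number of pairs (x, y) ∈ F_q² satisfying (x+y)^d - c·x^d = b and c·(x+y+a)^d - (x+a)^d = c·b equals the number of pairs (x, y) ∈ F_q² satisfying (x+y)^e - c^{-e}·x^e = c^{-e}·a and c^{-e}·(x+y+b)^e - (x + b·c⁻¹)^e = c^{-e}·a. -/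
/-!
Work in the coordinates `X = x`, `S = x + y`. Since `e d ≡ 1 (mod q - 1)`, the maps `z ↦ z ^ d`
and `z ↦ z ^ e` are mutually inverse permutations of `F_q`, so `(X, S) ↦ (X ^ d, (S + a) ^ d - b)`
is a permutation of `F_q²`. Both systems are equivalent to linear relations between `d`-th powers,
`(S + a) ^ d - b = c⁻¹ (X + a) ^ d` and `X ^ d + b c⁻¹ = c⁻¹ S ^ d` (for the second system after
raising to the `d`-th power, using `c^{-e} w = (c⁻¹ w ^ d) ^ e`), and this permutation carries the
solutions of the first system exactly onto those of the second.
-/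

section

variable {K : Type*} [GroupWithZero K] [Fintype K] {d e : ℕ}

theorem FiniteField.pow_eq_self_of_modEq {k : ℕ} (hk : k ≡ 1 [MOD Fintype.card K - 1])
    (hk0 : k ≠ 0) (z : K) : z ^ k = z := by
  rcases eq_or_ne z 0 with rfl | hz
  · exact zero_pow hk0
  obtain ⟨t, ht⟩ := (Nat.modEq_iff_dvd' (Nat.one_le_iff_ne_zero.mpr hk0)).mp hk.symm
  rw [← Nat.sub_add_cancel (Nat.one_le_iff_ne_zero.mpr hk0), ht, pow_succ, pow_mul,
    pow_card_sub_one_eq_one z hz, one_pow, one_mul]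

theorem FiniteField.pow_pow_eq_self_of_mul_modEq (hde : d * e ≡ 1 [MOD Fintype.card K - 1])
    (hd : d ≠ 0) (he : e ≠ 0) (z : K) : (z ^ d) ^ e = z := by
  rw [← pow_mul]
  exact pow_eq_self_of_modEq hde (mul_ne_zero hd he) z

theorem FiniteField.pow_left_inj_of_mul_modEq (hde : d * e ≡ 1 [MOD Fintype.card K - 1])
    (hd : d ≠ 0) (he : e ≠ 0) {x y : K} : x ^ d = y ^ d ↔ x = y :=
  (Function.LeftInverse.injective (pow_pow_eq_self_of_mul_modEq hde hd he)).eq_iff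

def FiniteField.powEquiv (hed : e * d ≡ 1 [MOD Fintype.card K - 1]) (hd : d ≠ 0) (he : e ≠ 0) :
    K ≃ K where
  toFun z := z ^ d
  invFun z := z ^ e
  left_inv := pow_pow_eq_self_of_mul_modEq (by rwa [mul_comm]) hd he
  right_inv := pow_pow_eq_self_of_mul_modEq hed he hd

end

theorem first_system_iff {K : Type*} [Field K] {d : ℕ} {c : K} (hc : c ≠ 0) (a b X S : K) :
    (S ^ d - c * X ^ d = b ∧ c * (S + a) ^ d - (X + a) ^ d = c * b) ↔
      ((S + a) ^ d - b = c⁻¹ * (X + a) ^ d ∧ X ^ d + b * c⁻¹ = c⁻¹ * S ^ d) := by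
  have hc' := inv_mul_cancel₀ hc
  rw [and_comm]
  refine and_congr ⟨fun h ↦ ?_, fun h ↦ ?_⟩ ⟨fun h ↦ ?_, fun h ↦ ?_⟩
  · linear_combination c⁻¹ * h - ((S + a) ^ d - b) * hc'
  · linear_combination c * h + (X + a) ^ d * hc'
  · linear_combination -c⁻¹ * h - X ^ d * hc'
  · linear_combination -c * h - (S ^ d - b) * hc'

open FiniteField

section

variable {K : Type*} [Field K] [Fintype K] {d e : ℕ}

theorem second_system_iff (hed : e * d ≡ 1 [MOD Fintype.card K - 1]) (hd : d ≠ 0) (he : e ≠ 0)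
    (c a b X S : K) :
    (S ^ e - c⁻¹ ^ e * X ^ e = c⁻¹ ^ e * a ∧
        c⁻¹ ^ e * (S + b) ^ e - (X + b * c⁻¹) ^ e = c⁻¹ ^ e * a) ↔
      (S = c⁻¹ * (X ^ e + a) ^ d ∧ X + b * c⁻¹ = c⁻¹ * ((S + b) ^ e - a) ^ d) := by
  have hde : d * e ≡ 1 [MOD Fintype.card K - 1] := by rwa [mul_comm]
  have inv_pow_mul (w : K) : c⁻¹ ^ e * w = (c⁻¹ * w ^ d) ^ e := by
    rw [mul_pow, pow_pow_eq_self_of_mul_modEq hde hd he]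
  refine and_congr ?_ ?_
  · calc _ ↔ S ^ e = c⁻¹ ^ e * (X ^ e + a) := by
          constructor <;> intro h <;> linear_combination h
      _ ↔ _ := by rw [inv_pow_mul, pow_left_inj_of_mul_modEq hed he hd]
  · calc _ ↔ (X + b * c⁻¹) ^ e = c⁻¹ ^ e * ((S + b) ^ e - a) := by
          constructor <;> intro h <;> linear_combination -h
      _ ↔ _ := by rw [inv_pow_mul, pow_left_inj_of_mul_modEq hed he hd]

theorem first_system_iff_second_system (hed : e * d ≡ 1 [MOD Fintype.card K - 1]) (hd : d ≠ 0)
    (he : e ≠ 0) {c : K} (hc : c ≠ 0) (a b X S : K) :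
    (S ^ d - c * X ^ d = b ∧ c * (S + a) ^ d - (X + a) ^ d = c * b) ↔
      (((S + a) ^ d - b) ^ e - c⁻¹ ^ e * (X ^ d) ^ e = c⁻¹ ^ e * a ∧
        c⁻¹ ^ e * ((S + a) ^ d - b + b) ^ e - (X ^ d + b * c⁻¹) ^ e = c⁻¹ ^ e * a) := by
  have hde : d * e ≡ 1 [MOD Fintype.card K - 1] := by rwa [mul_comm]
  rw [first_system_iff hc, second_system_iff hed hd he, sub_add_cancel,
    pow_pow_eq_self_of_mul_modEq hde hd he, pow_pow_eq_self_of_mul_modEq hde hd he,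
    add_sub_cancel_right]

/-- In the coordinates `(x, x + y)` this is `(X, S) ↦ (X ^ d, (S + a) ^ d - b)`. -/
def dualityEquiv (hed : e * d ≡ 1 [MOD Fintype.card K - 1]) (hd : d ≠ 0) (he : e ≠ 0)
    (a b : K) : K × K ≃ K × K :=
  Equiv.prodShear (powEquiv hed hd he) fun x ↦
    (Equiv.addLeft (x + a)).trans ((powEquiv hed hd he).trans (Equiv.subRight (b + x ^ d)))

theorem dualityEquiv_apply (hed : e * d ≡ 1 [MOD Fintype.card K - 1]) (hd : d ≠ 0) (he : e ≠ 0)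
    (a b x y : K) :
    dualityEquiv hed hd he a b (x, y) = (x ^ d, (x + a + y) ^ d - (b + x ^ d)) := by
  simp [dualityEquiv, powEquiv, add_assoc]

end

theorem stmt13_general (F : Type*) [Field F] [Fintype F]
    (c : F) (hc : c ≠ 0) (d : ℕ) (hd : 1 < d)
    (e : ℕ) (he1 : 1 ≤ e)
    (hed : e * d ≡ 1 [MOD Fintype.card F - 1])
    (a b : F) :
    Nat.card {xy : F × F //
      (xy.1 + xy.2) ^ d - c * xy.1 ^ d = b ∧
      c * (xy.1 + xy.2 + a) ^ d - (xy.1 + a) ^ d = c * b}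
    = Nat.card {xy : F × F //
      (xy.1 + xy.2) ^ e - c⁻¹ ^ e * xy.1 ^ e = c⁻¹ ^ e * a ∧
      c⁻¹ ^ e * (xy.1 + xy.2 + b) ^ e - (xy.1 + b * c⁻¹) ^ e = c⁻¹ ^ e * a} := by
  have hd0 : d ≠ 0 := by omega
  have he0 : e ≠ 0 := by omega
  refine Nat.card_congr ((dualityEquiv hed hd0 he0 a b).subtypeEquiv fun ⟨x, y⟩ ↦ ?_)
  rw [dualityEquiv_apply, first_system_iff_second_system hed hd0 he0 hc,
    show x ^ d + ((x + a + y) ^ d - (b + x ^ d)) = (x + y + a) ^ d - b by ring]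

theorem stmt13 (F : Type*) [Field F] [Fintype F]
    (c : F) (hc : c ≠ 0) (d : ℕ) (hd : 1 < d)
    (hgcd : Nat.gcd d (Fintype.card F - 1) = 1)
    (e : ℕ) (he1 : 1 ≤ e) (he2 : e < Fintype.card F - 1)
    (hed : e * d ≡ 1 [MOD Fintype.card F - 1])
    (a b : F) :
    Nat.card {xy : F × F //
      (xy.1 + xy.2) ^ d - c * xy.1 ^ d = b ∧
      c * (xy.1 + xy.2 + a) ^ d - (xy.1 + a) ^ d = c * b}
    = Nat.card {xy : F × F //
      (xy.1 + xy.2) ^ e - c⁻¹ ^ e * xy.1 ^ e = c⁻¹ ^ e * a ∧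
      c⁻¹ ^ e * (xy.1 + xy.2 + b) ^ e - (xy.1 + b * c⁻¹) ^ e = c⁻¹ ^ e * a} :=
  stmt13_general F c hc d hd e he1 hed a b
end

section
/- Let F_q be a finite field, let c ∈ F_q \ {0, 1}, and let p1, ..., pn be univariate permutation polynomials on F_q each of degree at most d (with each degree > 1) and each with differential uniformity less than q. Let the map F : F_q^n → F_q^n be a GTDS built from the p_i with multiplier polynomials g_i having no zeros and arbitrary h_i. Then for any Δx, Δy ∈ F_q^n, the number of x ∈ F_q^n with F(x + Δx) - c·F(x) = Δy is at most d · q^{n-1-w} · d^w, where w is the number of nonzero entries among the first n-1 coordinates of Δx. -/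
/-!
The system `F(x + Δx) - c F(x) = Δy` is triangular: once the coordinates after `i` are fixed,
the `i`-th equation reads `α p_i(t + Δx_i) - β p_i(t) = γ` in the unknown `t = x_i`, with
`α = g_i(x + Δx) ≠ 0` and `β = c g_i(x)`. The polynomial on the left minus `γ` is nonzero of degree
at most `d` whenever `α ≠ β` (leading coefficient `(α - β) lc(p_i)`) or `Δx_i ≠ 0` (otherwise
`p_i(t + Δx_i) - p_i(t)` would be constant, contradicting `δ(p_i) < q`). For `i = n` we have
`α = 1 ≠ c = β`. So each coordinate has at most `d` solutions, except those `i < n` with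
`Δx_i = 0`, which have at most `q`, and the counts multiply.
-/

open Polynomial

section Univariate

variable {R : Type*} [CommRing R] [IsDomain R]

theorem card_eval_eq_le_natDegree {q : R[X]} {γ : R} (hq : q ≠ C γ) :
    Nat.card {t : R // q.eval t = γ} ≤ q.natDegree := by
  classical
  have hq' : q - C γ ≠ 0 := sub_ne_zero.mpr hq
  calc Nat.card {t : R // q.eval t = γ} = (q - C γ).roots.toFinset.card := by
        rw [← Nat.card_eq_finsetCard]
        exact Nat.card_congr (Equiv.subtypeEquivRight fun t => by simp [hq', sub_eq_zero])
    _ ≤ Multiset.card (q - C γ).roots := Multiset.toFinset_card_le _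
    _ ≤ (q - C γ).natDegree := card_roots' _
    _ = q.natDegree := natDegree_sub_C

theorem natDegree_C_mul_comp_X_add_C_sub_C_mul_le (p : R[X]) (α β a : R) :
    (C α * p.comp (X + C a) - C β * p).natDegree ≤ p.natDegree := by
  refine (natDegree_sub_le _ _).trans (max_le ?_ (natDegree_C_mul_le _ _))
  exact (natDegree_C_mul_le _ _).trans (by rw [natDegree_comp, natDegree_X_add_C, mul_one])

theorem coeff_C_mul_comp_X_add_C_sub_C_mul_natDegree (p : R[X]) (α β a : R) :
    (C α * p.comp (X + C a) - C β * p).coeff p.natDegree = (α - β) * p.leadingCoeff := by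
  have hlc : (p.comp (X + C a)).coeff p.natDegree = p.leadingCoeff := by
    have := leadingCoeff_comp (p := p) (q := X + C a) (by simp)
    rwa [leadingCoeff, natDegree_comp, natDegree_X_add_C, mul_one, leadingCoeff_X_add_C, one_pow,
      mul_one] at this
  rw [coeff_sub, coeff_C_mul, coeff_C_mul, hlc, coeff_natDegree, sub_mul]

theorem C_mul_comp_X_add_C_sub_C_mul_ne_C {p : R[X]} (hp : 0 < p.natDegree) {α β a : R}
    (h : α ≠ β ∨ α ≠ 0 ∧ ∀ b, ∃ t, p.eval (t + a) - p.eval t ≠ b) (γ : R) :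
    C α * p.comp (X + C a) - C β * p ≠ C γ := by
  intro hγ
  by_cases hαβ : α = β
  · subst hαβ
    obtain ⟨hα, hdiff⟩ := h.resolve_left (not_not.mpr rfl)
    have hconst : ∀ t, α * (p.eval (t + a) - p.eval t) = γ := fun t => by
      simpa [eval_comp, mul_sub] using congrArg (eval t) hγ
    obtain ⟨t, ht⟩ := hdiff (p.eval (0 + a) - p.eval 0)
    exact ht (mul_left_cancel₀ hα ((hconst t).trans (hconst 0).symm))
  · have hcoeff := coeff_C_mul_comp_X_add_C_sub_C_mul_natDegree p α β a
    rw [hγ, coeff_C, if_neg hp.ne', eq_comm] at hcoeff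
    exact mul_ne_zero (sub_ne_zero.mpr hαβ)
      (leadingCoeff_ne_zero.mpr (ne_zero_of_natDegree_gt hp)) hcoeff

theorem card_twisted_difference_le {p : R[X]} (hp : 0 < p.natDegree) {α β a : R}
    (h : α ≠ β ∨ α ≠ 0 ∧ ∀ b, ∃ t, p.eval (t + a) - p.eval t ≠ b) (γ : R) :
    Nat.card {t : R // α * p.eval (t + a) - β * p.eval t = γ} ≤ p.natDegree := by
  have := card_eval_eq_le_natDegree (C_mul_comp_X_add_C_sub_C_mul_ne_C hp h γ)
  simp only [eval_sub, eval_mul, eval_C, eval_comp, eval_add, eval_X] at this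
  exact this.trans (natDegree_C_mul_comp_X_add_C_sub_C_mul_le p α β a)

end Univariate

theorem DependsOn.apply_cons_tail {α β : Type*} {n : ℕ} {f : (Fin (n + 1) → α) → β}
    {s : Set (Fin (n + 1))} (hf : DependsOn f s) (hs : 0 ∉ s) (a : α) (x : Fin (n + 1) → α) :
    f (Fin.cons a (Fin.tail x)) = f x :=
  hf fun j hj => by
    cases j using Fin.cases with
    | zero => exact absurd hj hs
    | succ j => rfl

theorem card_triangular_le_prod {α : Type*} [Finite α] : ∀ {n : ℕ}
    (P : Fin n → α → (Fin n → α) → Prop) (m : Fin n → ℕ),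
    (∀ i t, DependsOn (P i t) (Set.Ioi i)) → (∀ i x, Nat.card {t // P i t x} ≤ m i) →
    Nat.card {x : Fin n → α // ∀ i, P i (x i) x} ≤ ∏ i, m i
  | 0, P, m, _, _ => by simp
  | n + 1, P, m, hP, hm => by
    rcases isEmpty_or_nonempty α with hα | ⟨⟨z⟩⟩
    · simp
    -- `P i.succ` does not see coordinate `0`, so it may be frozen at an arbitrary `z`.
    let Q : Fin n → α → (Fin n → α) → Prop := fun i t y => P i.succ t (Fin.cons z y)
    have hQ : ∀ i t, DependsOn (Q i t) (Set.Ioi i) := fun i t y y' hyy' =>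
      hP i.succ t fun j hj => by
        cases j using Fin.cases with
        | zero => exact absurd hj (Fin.not_lt_zero _)
        | succ j => exact hyy' j (Fin.succ_lt_succ_iff.mp hj)
    let e : {x : Fin (n + 1) → α // ∀ i, P i (x i) x} →
        Σ y : {y : Fin n → α // ∀ i, Q i (y i) y}, {t // P 0 t (Fin.cons z y.1)} :=
      fun x => ⟨⟨Fin.tail x.1, fun i =>
          ((hP i.succ _).apply_cons_tail (Fin.not_lt_zero _) z x.1).mpr (x.2 i.succ)⟩,
        ⟨x.1 0, ((hP 0 _).apply_cons_tail (lt_irrefl 0) z x.1).mpr (x.2 0)⟩⟩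
    have he : Function.Injective e := fun x x' hxx' => by
      have htail : Fin.tail x.1 = Fin.tail x'.1 := congrArg (fun s => s.1.1) hxx'
      have hhead : x.1 0 = x'.1 0 := congrArg (fun s => s.2.1) hxx'
      rw [Subtype.ext_iff, ← Fin.cons_self_tail x.1, ← Fin.cons_self_tail x'.1, htail, hhead]
    have : Fintype {y : Fin n → α // ∀ i, Q i (y i) y} := Fintype.ofFinite _
    calc Nat.card {x : Fin (n + 1) → α // ∀ i, P i (x i) x}
        ≤ Nat.card (Σ y : {y : Fin n → α // ∀ i, Q i (y i) y}, {t // P 0 t (Fin.cons z y.1)}) :=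
          Nat.card_le_card_of_injective e he
      _ = ∑ y : {y : Fin n → α // ∀ i, Q i (y i) y}, Nat.card {t // P 0 t (Fin.cons z y.1)} :=
          Nat.card_sigma
      _ ≤ ∑ _y : {y : Fin n → α // ∀ i, Q i (y i) y}, m 0 :=
          Finset.sum_le_sum fun y _ => hm 0 _
      _ = Nat.card {y : Fin n → α // ∀ i, Q i (y i) y} * m 0 := by
          rw [Finset.sum_const, smul_eq_mul, Finset.card_univ, Nat.card_eq_fintype_card]
      _ ≤ (∏ i : Fin n, m i.succ) * m 0 :=
          Nat.mul_le_mul_right _ (card_triangular_le_prod Q _ hQ fun i y => hm i.succ _)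
      _ = ∏ i, m i := by rw [Fin.prod_univ_succ, mul_comm]

theorem prod_ite_eq_last_or {M : Type*} [CommMonoid M] {n : ℕ} (s : Fin (n + 1) → Prop)
    [DecidablePred s] (a b : M) :
    ∏ i, (if i = Fin.last n ∨ s i then a else b) =
      a * b ^ (n - (Finset.univ.filter fun i => i ≠ Fin.last n ∧ s i).card)
        * a ^ (Finset.univ.filter fun i => i ≠ Fin.last n ∧ s i).card := by
  set w := (Finset.univ.filter fun i => i ≠ Fin.last n ∧ s i).card
  have hcard : (Finset.univ.filter fun i => i = Fin.last n ∨ s i).card = w + 1 := by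
    rw [← Finset.card_insert_of_notMem (s := Finset.univ.filter _) (a := Fin.last n) (by simp)]
    congr 1
    ext i
    by_cases hi : i = Fin.last n <;> simp [hi]
  have hcompl := Finset.card_filter_add_card_filter_not (s := Finset.univ)
    (fun i : Fin (n + 1) => i = Fin.last n ∨ s i)
  rw [hcard, Finset.card_univ, Fintype.card_fin] at hcompl
  rw [Finset.prod_ite, Finset.prod_const, Finset.prod_const, hcard,
    show (Finset.univ.filter fun i => ¬(i = Fin.last n ∨ s i)).card = n - w by omega,
    pow_succ', mul_assoc, mul_assoc, mul_comm (a ^ w)]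

theorem exists_ne_of_card_lt {α β : Type*} [Fintype α] {f : α → β} {b : β}
    (h : Nat.card {x // f x = b} < Fintype.card α) : ∃ x, f x ≠ b := by
  by_contra! hall
  simp [hall] at h

theorem stmt16_general (F : Type*) [Field F] [Fintype F] [DecidableEq F] (n : ℕ)
    (c : F) (hc1 : c ≠ 1) (d : ℕ)
    (p : Fin (n + 1) → F[X])
    (hdeg1 : ∀ i, 1 < (p i).natDegree)
    (hdegd : ∀ i, (p i).natDegree ≤ d)
    (hdelta : ∀ i, ∀ a : F, a ≠ 0 → ∀ b : F,
      Nat.card {x : F // (p i).eval (x + a) - (p i).eval x = b} < Fintype.card F)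
    (g h : Fin (n + 1) → (Fin (n + 1) → F) → F)
    (hgdep : ∀ i, ∀ x y : Fin (n + 1) → F, (∀ j, i < j → x j = y j) → g i x = g i y)
    (hhdep : ∀ i, ∀ x y : Fin (n + 1) → F, (∀ j, i < j → x j = y j) → h i x = h i y)
    (hgne : ∀ i x, g i x ≠ 0)
    (hglast : ∀ x, g (Fin.last n) x = 1)
    (G : (Fin (n + 1) → F) → Fin (n + 1) → F)
    (hG : ∀ x i, G x i = (p i).eval (x i) * g i x + h i x)
    (Δx Δy : Fin (n + 1) → F) :
    Nat.card {x : Fin (n + 1) → F // ∀ i, G (x + Δx) i - c * G x i = Δy i}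
      ≤ d * Fintype.card F ^
            (n - (Finset.univ.filter fun i : Fin (n + 1) =>
              i ≠ Fin.last n ∧ Δx i ≠ 0).card)
          * d ^ (Finset.univ.filter fun i : Fin (n + 1) =>
              i ≠ Fin.last n ∧ Δx i ≠ 0).card := by
  let P : Fin (n + 1) → F → (Fin (n + 1) → F) → Prop := fun i t x =>
    g i (x + Δx) * (p i).eval (t + Δx i) - c * g i x * (p i).eval t
      = Δy i - h i (x + Δx) + c * h i x
  have hP : ∀ i t, DependsOn (P i t) (Set.Ioi i) := fun i t x y hxy => by
    have hxy' : ∀ j, i < j → (x + Δx) j = (y + Δx) j := fun j hj => by simp [hxy j hj]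
    simp only [P, hgdep i x y hxy, hgdep i _ _ hxy', hhdep i x y hxy, hhdep i _ _ hxy']
  have hm : ∀ i x, Nat.card {t // P i t x} ≤
      if i = Fin.last n ∨ Δx i ≠ 0 then d else Fintype.card F := fun i x => by
    split_ifs with hi
    · refine (card_twisted_difference_le (zero_lt_one.trans (hdeg1 i)) ?_ _).trans (hdegd i)
      rcases hi with rfl | ha
      · exact Or.inl (by simpa [hglast] using hc1.symm)
      · exact Or.inr ⟨hgne i _, fun b => exists_ne_of_card_lt (hdelta i _ ha b)⟩
    · exact (Finite.card_subtype_le _).trans_eq Nat.card_eq_fintype_card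
  calc Nat.card {x : Fin (n + 1) → F // ∀ i, G (x + Δx) i - c * G x i = Δy i}
      = Nat.card {x : Fin (n + 1) → F // ∀ i, P i (x i) x} :=
        Nat.card_congr <| Equiv.subtypeEquivRight fun x => forall_congr' fun i => by
          simp only [P, hG, Pi.add_apply]
          constructor <;> intro hx <;> linear_combination hx
    _ ≤ _ := card_triangular_le_prod P _ hP hm
    _ = _ := prod_ite_eq_last_or _ _ _

theorem stmt16 (F : Type*) [Field F] [Fintype F] [DecidableEq F] (n : ℕ)
    (c : F) (hc0 : c ≠ 0) (hc1 : c ≠ 1) (d : ℕ)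
    (p : Fin (n + 1) → F[X])
    (hperm : ∀ i, Function.Bijective fun x : F => (p i).eval x)
    (hdeg1 : ∀ i, 1 < (p i).natDegree)
    (hdegd : ∀ i, (p i).natDegree ≤ d)
    (hdelta : ∀ i, ∀ a : F, a ≠ 0 → ∀ b : F,
      Nat.card {x : F // (p i).eval (x + a) - (p i).eval x = b} < Fintype.card F)
    (g h : Fin (n + 1) → (Fin (n + 1) → F) → F)
    (hgdep : ∀ i, ∀ x y : Fin (n + 1) → F, (∀ j, i < j → x j = y j) → g i x = g i y)
    (hhdep : ∀ i, ∀ x y : Fin (n + 1) → F, (∀ j, i < j → x j = y j) → h i x = h i y)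
    (hgne : ∀ i x, g i x ≠ 0)
    (hglast : ∀ x, g (Fin.last n) x = 1)
    (hhlast : ∀ x, h (Fin.last n) x = 0)
    (G : (Fin (n + 1) → F) → Fin (n + 1) → F)
    (hG : ∀ x i, G x i = (p i).eval (x i) * g i x + h i x)
    (Δx Δy : Fin (n + 1) → F) :
    Nat.card {x : Fin (n + 1) → F // ∀ i, G (x + Δx) i - c * G x i = Δy i}
      ≤ d * Fintype.card F ^
            (n - (Finset.univ.filter fun i : Fin (n + 1) =>
              i ≠ Fin.last n ∧ Δx i ≠ 0).card)
          * d ^ (Finset.univ.filter fun i : Fin (n + 1) =>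
              i ≠ Fin.last n ∧ Δx i ≠ 0).card :=
  stmt16_general F n c hc1 d p hdeg1 hdegd hdelta g h hgdep hhdep hgne hglast G hG Δx Δy
end

section
/- Let F_q be a finite field of characteristic p, let c ∈ F_q be nonzero, and let F : F_q^n → F_q^n be a GTDS with p_i(x) = x^{d_i} where gcd(d_i, q-1) = 1, 1 < d_i ≤ d, and p ∤ d_i for all i, and with h_i = 0 for all i. Then for any a, b ∈ F_q^n, the number of pairs (z, x) ∈ F_q^n × F_q^n satisfying F(z) - c·F(x) = b and c·F(z + a) - F(x + a) = c·b is at most q^{n - w} · d^{2w}, where w is the number of indices i with a_i·b_i ≠ 0. -/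
open Polynomial Finset

lemma pow_inj_of_gcd (F : Type*) [Field F] [Fintype F] [DecidableEq F] (e : ℕ) (he : e ≠ 0)
    (hgcd : Nat.gcd e (Fintype.card F - 1) = 1) :
    Function.Injective (fun x : F => x ^ e) := by
  intro x y hxy
  simp only at hxy
  rcases eq_or_ne x 0 with rfl | hx
  · rcases eq_or_ne y 0 with rfl | hy
    · rfl
    · exfalso; rw [zero_pow he] at hxy
      exact hy (pow_eq_zero_iff he |>.mp hxy.symm)
  · rcases eq_or_ne y 0 with rfl | hy
    · exfalso; rw [zero_pow he] at hxy
      exact hx (pow_eq_zero_iff he |>.mp hxy)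
    · have hco : (Nat.card Fˣ).Coprime e := by
        rw [Nat.card_eq_fintype_card, Fintype.card_units]
        exact Nat.Coprime.symm hgcd
      have := (powCoprime hco).injective (a₁ := Units.mk0 x hx) (a₂ := Units.mk0 y hy)
      have h2 : (Units.mk0 x hx) ^ e = (Units.mk0 y hy) ^ e := by
        ext; push_cast; exact hxy
      have := this (by simpa [powCoprime] using h2)
      simpa [Units.ext_iff] using this

-- generic binomial split
lemma bin_split {S : Type*} [CommRing S] (e : ℕ) (γ : S) :
    (X + C γ)^e = X^e + ∑ k ∈ range e, C ((e.choose k : S) * γ^(e-k)) * X^k := by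
  rw [add_pow]
  rw [Finset.sum_range_succ]
  simp only [Nat.choose_self, Nat.sub_self, pow_zero, mul_one, Nat.cast_one]
  rw [add_comm]
  congr 1
  apply Finset.sum_congr rfl
  intro k hk
  rw [map_mul, map_pow, Polynomial.C_eq_natCast]
  ring

lemma core_poly {K : Type*} [Field K] [IsAlgClosed K] (e : ℕ) (he2 : 2 ≤ e)
    (heK : (e : K) ≠ 0)
    (c a b α β α' β' : K) (hc : c ≠ 0) (ha : a ≠ 0) (hb : b ≠ 0)
    (hα : α ≠ 0) (hβ : β ≠ 0) (hα' : α' ≠ 0) (hβ' : β' ≠ 0) :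
    ∃ D : Polynomial K, D ≠ 0 ∧ D.natDegree ≤ e^2 ∧
      ∀ u v : K, (u ^ e * β - c * (v ^ e * α) = b) →
        (c * ((u + a) ^ e * β') - (v + a) ^ e * α' = c * b) →
        D.eval v = 0 := by
  have he0 : e ≠ 0 := by omega
  have hepos : 0 < e := by omega
  set P : K[X] := C (c * α * β⁻¹) * X^e + C (b * β⁻¹) with hP
  set Q : K[X] := C (α' * (c * β')⁻¹) * (X + C a)^e + C (b * β'⁻¹) with hQ
  set T : K[X] := Q - P with hT
  set A : (K[X])[X] := X^e - C P with hA
  set χ : ℕ → K := fun k => (e.choose k : K) * a^(e-k) with hχ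
  set η : (K[X])[X] := (X + C (C a))^e - X^e - C T with hη
  have hXa : ((X + C a)^e : K[X]).natDegree ≤ e := by
    calc ((X + C a)^e : K[X]).natDegree ≤ e * (X + C a).natDegree :=
          Polynomial.natDegree_pow_le
      _ ≤ e := by rw [Polynomial.natDegree_X_add_C]; omega
  have hPdeg : P.natDegree ≤ e := by
    refine le_trans (Polynomial.natDegree_add_le _ _) ?_
    simp only [Polynomial.natDegree_C, max_le_iff]
    refine ⟨le_trans (Polynomial.natDegree_C_mul_le _ _) (by simp), by omega⟩
  have hQdeg : Q.natDegree ≤ e := by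
    refine le_trans (Polynomial.natDegree_add_le _ _) ?_
    simp only [Polynomial.natDegree_C, max_le_iff]
    refine ⟨le_trans (Polynomial.natDegree_C_mul_le _ _) hXa, by omega⟩
  have hTdeg : T.natDegree ≤ e :=
    le_trans (Polynomial.natDegree_sub_le _ _) (by rw [max_le_iff]; exact ⟨hQdeg, hPdeg⟩)
  -- evaluation identities
  have hPeval : ∀ u v : K, (u ^ e * β - c * (v ^ e * α) = b) → P.eval v = u ^ e := by
    intro u v h
    simp only [hP, eval_add, eval_mul, eval_C, eval_pow, eval_X]
    field_simp
    linear_combination -h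
  have hQeval : ∀ u v : K, (c * ((u + a) ^ e * β') - (v + a) ^ e * α' = c * b) →
      Q.eval v = (u + a) ^ e := by
    intro u v h
    simp only [hQ, eval_add, eval_mul, eval_C, eval_pow, eval_X]
    field_simp
    linear_combination -h
  -- binomial expansion of η
  have hbin : η = (∑ k ∈ range e, C (C (χ k)) * X^k) - C T := by
    rw [hη, bin_split e (C a : K[X])]
    have hcongr : ∀ k ∈ range e,
        (C ((e.choose k : K[X]) * (C a : K[X])^(e-k)) : (K[X])[X]) * X^k
        = C (C (χ k)) * X^k := by
      intro k _
      congr 1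
      rw [hχ]
      simp only [map_mul, map_pow, Polynomial.C_eq_natCast]
    rw [Finset.sum_congr rfl hcongr]
    ring
  -- reduction of η * X^j modulo A
  have RED : ∀ j : Fin e, ∃ qr : (K[X])[X] × (K[X])[X],
      η * X^(j:ℕ) = qr.1 * A + qr.2 ∧ qr.2.natDegree < e ∧
      ∀ i, (qr.2.coeff i).natDegree ≤ e := by
    intro j
    have hj : (j : ℕ) < e := j.isLt
    refine ⟨(∑ k ∈ range e, if e ≤ k + (j:ℕ) then C (C (χ k)) * X^(k+(j:ℕ)-e) else 0,
      (∑ k ∈ range e, if e ≤ k + (j:ℕ) then C (C (χ k) * P) * X^(k+(j:ℕ)-e)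
        else C (C (χ k)) * X^(k+(j:ℕ))) - C T * X^(j:ℕ)), ?_, ?_, ?_⟩
    · have hterm : ∀ k ∈ range e,
          (if e ≤ k + (j:ℕ) then C (C (χ k)) * X^(k+(j:ℕ)-e) else 0) * A
            + (if e ≤ k + (j:ℕ) then C (C (χ k) * P) * X^(k+(j:ℕ)-e)
                else C (C (χ k)) * X^(k+(j:ℕ)))
          = C (C (χ k)) * X^k * X^(j:ℕ) := by
        intro k _
        by_cases hke : e ≤ k + (j:ℕ)
        · simp only [hke, if_true, hA, map_mul]
          have hxp : (X:(K[X])[X])^(k+(j:ℕ)-e) * X^e = X^k * X^(j:ℕ) := by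
            rw [← pow_add, ← pow_add]
            congr 1
            omega
          linear_combination (C (C (χ k)) : (K[X])[X]) * hxp
        · simp only [hke, if_false, zero_mul, zero_add]
          rw [mul_assoc, ← pow_add]
      have key : (∑ k ∈ range e, C (C (χ k)) * X ^ k * X ^ (j:ℕ))
          = (∑ k ∈ range e, if e ≤ k + (j:ℕ) then C (C (χ k)) * X^(k+(j:ℕ)-e) else 0) * A
            + ∑ k ∈ range e, (if e ≤ k + (j:ℕ) then C (C (χ k) * P) * X^(k+(j:ℕ)-e)
                else C (C (χ k)) * X^(k+(j:ℕ))) := by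
        rw [Finset.sum_mul, ← Finset.sum_add_distrib]
        exact (Finset.sum_congr rfl hterm).symm
      rw [hbin, sub_mul, Finset.sum_mul, key]
      ring
    · refine lt_of_le_of_lt (le_trans (Polynomial.natDegree_sub_le _ _) ?_)
        (show e - 1 < e by omega)
      rw [max_le_iff]
      constructor
      · refine Polynomial.natDegree_sum_le_of_forall_le _ _ ?_
        intro k hk
        simp only [Finset.mem_range] at hk
        by_cases hke : e ≤ k + (j:ℕ)
        · simp only [hke, if_true]
          refine le_trans (Polynomial.natDegree_C_mul_le _ _) ?_
          rw [Polynomial.natDegree_X_pow]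
          omega
        · simp only [hke, if_false]
          refine le_trans (Polynomial.natDegree_C_mul_le _ _) ?_
          rw [Polynomial.natDegree_X_pow]
          omega
      · refine le_trans (Polynomial.natDegree_C_mul_le _ _) ?_
        rw [Polynomial.natDegree_X_pow]
        omega
    · intro i
      rw [Polynomial.coeff_sub, Polynomial.finset_sum_coeff]
      refine le_trans (Polynomial.natDegree_sub_le _ _) ?_
      rw [max_le_iff]
      constructor
      · refine Polynomial.natDegree_sum_le_of_forall_le _ _ ?_
        intro k _
        by_cases hke : e ≤ k + (j:ℕ)
        · simp only [hke, if_true, Polynomial.coeff_C_mul, Polynomial.coeff_X_pow]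
          by_cases hik : i = k + (j:ℕ) - e
          · simp only [hik, if_true, mul_one]
            exact le_trans (Polynomial.natDegree_C_mul_le _ _) hPdeg
          · simp [hik]
        · simp only [hke, if_false, Polynomial.coeff_C_mul, Polynomial.coeff_X_pow]
          by_cases hik : i = k + (j:ℕ)
          · simp [hik]
          · simp [hik]
      · rw [Polynomial.coeff_C_mul, Polynomial.coeff_X_pow]
        by_cases hij : i = (j:ℕ)
        · simpa [hij] using hTdeg
        · simp [hij]
  classical
  set r : Fin e → (K[X])[X] := fun j => (Classical.choose (RED j)).2 with hr
  set q : Fin e → (K[X])[X] := fun j => (Classical.choose (RED j)).1 with hq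
  have hRED : ∀ j : Fin e, η * X^(j:ℕ) = q j * A + r j ∧ (r j).natDegree < e ∧
      ∀ i, ((r j).coeff i).natDegree ≤ e := fun j => by
    have := Classical.choose_spec (RED j); exact ⟨this.1, this.2.1, this.2.2⟩
  set M : Matrix (Fin e) (Fin e) K[X] := Matrix.of (fun i j => (r j).coeff (i:ℕ)) with hM
  have hmapη : ∀ v : K, Polynomial.map (Polynomial.evalRingHom v) η
      = (X + C a)^e - X^e - C (T.eval v) := by
    intro v
    simp only [hη, Polynomial.map_sub, Polynomial.map_pow, Polynomial.map_add,
      Polynomial.map_X, Polynomial.map_C, Polynomial.coe_evalRingHom,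
      Polynomial.eval_C]
  have hmapA : ∀ v : K, Polynomial.map (Polynomial.evalRingHom v) A
      = X^e - C (P.eval v) := by
    intro v
    simp only [hA, Polynomial.map_sub, Polynomial.map_pow, Polynomial.map_X,
      Polynomial.map_C, Polynomial.coe_evalRingHom]
  have hmapRED : ∀ (v : K) (j : Fin e),
      Polynomial.map (Polynomial.evalRingHom v) η * X ^ (j:ℕ)
        = Polynomial.map (Polynomial.evalRingHom v) (q j)
            * Polynomial.map (Polynomial.evalRingHom v) A
          + Polynomial.map (Polynomial.evalRingHom v) (r j) := by
    intro v j
    have := congrArg (Polynomial.map (Polynomial.evalRingHom v)) (hRED j).1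
    simpa only [Polynomial.map_mul, Polynomial.map_add, Polynomial.map_pow,
      Polynomial.map_X] using this
  refine ⟨M.det, ?_, ?_, ?_⟩
  · -- nonvanishing
    set s0 : K := -(b * (c*α)⁻¹) with hs0def
    have hs0 : s0 ≠ 0 := by
      simp only [hs0def, neg_ne_zero]
      exact mul_ne_zero hb (inv_ne_zero (mul_ne_zero hc hα))
    set S : K[X] := X^e - C s0 with hSdef
    have hSsep : S.Separable := Polynomial.separable_X_pow_sub_C s0 heK hs0
    have hScard : Multiset.card S.roots = e := by
      rw [Polynomial.splits_iff_card_roots.mp (IsAlgClosed.splits S)]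
      exact Polynomial.natDegree_X_pow_sub_C
    have hSne : S ≠ 0 := by
      intro h
      rw [h] at hScard
      simp at hScard
      omega
    have hPS : P = C (c * α * β⁻¹) * S := by
      rw [hP, hSdef, mul_sub, ← map_mul]
      have h1 : c * α * β⁻¹ * s0 = -(b * β⁻¹) := by
        rw [hs0def]
        field_simp
      rw [h1, map_neg, sub_neg_eq_add]
    set qc : K := α' * (c * β')⁻¹ with hqcdef
    have hqc : qc ≠ 0 := mul_ne_zero hα' (inv_ne_zero (mul_ne_zero hc hβ'))
    -- find a good root of S
    have hgood : ∃ v₀, v₀ ∈ S.roots ∧ Q.eval v₀ ≠ a^e := by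
      by_contra hcon
      push_neg at hcon
      set W : K[X] := C qc * (∑ k ∈ range e, C (χ k) * X^k)
        + C (b*β'⁻¹ - a^e + qc * s0) with hWdef
      have hWQ : W = Q - C (a^e) - C qc * S := by
        rw [hWdef, hQ, hSdef, bin_split e a]
        simp only [hχ, map_add, map_sub, map_mul]
        ring
      have hWeval : ∀ v₀ ∈ S.roots, W.eval v₀ = 0 := by
        intro v₀ hv₀
        have hroot : S.eval v₀ = 0 := (Polynomial.mem_roots'.mp hv₀).2
        rw [hWQ]
        simp only [Polynomial.eval_sub, Polynomial.eval_mul, Polynomial.eval_C]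
        rw [hroot, hcon v₀ hv₀]
        ring
      have hWdeg : W.natDegree ≤ e - 1 := by
        rw [hWdef]
        refine le_trans (Polynomial.natDegree_add_le _ _) ?_
        rw [max_le_iff, Polynomial.natDegree_C]
        constructor
        · refine le_trans (Polynomial.natDegree_C_mul_le _ _) ?_
          refine Polynomial.natDegree_sum_le_of_forall_le _ _ ?_
          intro k hk
          simp only [Finset.mem_range] at hk
          refine le_trans (Polynomial.natDegree_C_mul_le _ _) ?_
          rw [Polynomial.natDegree_X_pow]
          omega
        · omega
      have hWne : W ≠ 0 := by
        have hch : e.choose (e-1) = e := by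
          have h1 : e - (e - 1) = 1 := by omega
          have := Nat.choose_symm (show e - 1 ≤ e by omega)
          rw [h1, Nat.choose_one_right] at this
          omega
        have hcoeff : W.coeff (e-1) = qc * (e * a) := by
          rw [hWdef, Polynomial.coeff_add, Polynomial.coeff_C,
            if_neg (show ¬ (e-1 = 0) by omega), Polynomial.coeff_C_mul,
            Polynomial.finset_sum_coeff]
          have : ∀ k ∈ range e, (C (χ k) * X^k).coeff (e-1)
              = if e-1 = k then χ k else 0 := by
            intro k _
            rw [Polynomial.coeff_C_mul, Polynomial.coeff_X_pow]
            split <;> simp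
          rw [Finset.sum_congr rfl this, Finset.sum_ite_eq (range e) (e-1)]
          rw [if_pos (Finset.mem_range.mpr (by omega))]
          rw [hχ]
          simp only [hch]
          have : e - (e - 1) = 1 := by omega
          rw [this, pow_one, add_zero]
        intro h
        rw [h, Polynomial.coeff_zero] at hcoeff
        exact (mul_ne_zero hqc (mul_ne_zero heK ha)) hcoeff.symm
      -- S has e distinct roots, all roots of W of degree ≤ e-1
      have hsub : S.roots.toFinset ⊆ W.roots.toFinset := by
        intro x hx
        rw [Multiset.mem_toFinset] at hx ⊢
        rw [Polynomial.mem_roots hWne]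
        exact hWeval x hx
      have hcard1 : S.roots.toFinset.card = e := by
        rw [Multiset.toFinset_card_of_nodup (Polynomial.nodup_roots hSsep)]
        exact hScard
      have : e ≤ e - 1 := by
        calc e = S.roots.toFinset.card := hcard1.symm
          _ ≤ W.roots.toFinset.card := Finset.card_le_card hsub
          _ ≤ Multiset.card W.roots := Multiset.toFinset_card_le _
          _ ≤ W.natDegree := Polynomial.card_roots' W
          _ ≤ e - 1 := hWdeg
      omega
    obtain ⟨v₀, hv₀mem, hQv₀⟩ := hgood
    have hSv₀ : S.eval v₀ = 0 := (Polynomial.mem_roots'.mp hv₀mem).2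
    have hPv₀ : P.eval v₀ = 0 := by
      rw [hPS, Polynomial.eval_mul, hSv₀, mul_zero]
    -- show the evaluated determinant is nonzero
    have hdetv : ((Polynomial.evalRingHom v₀).mapMatrix M).det ≠ 0 := by
      intro hdet0
      obtain ⟨y, hy0, hmv⟩ := Matrix.exists_mulVec_eq_zero_iff.mpr hdet0
      set N : K[X] := ∑ j : Fin e, C (y j) * X^(j:ℕ) with hNdef
      have hNcoeff : ∀ j : Fin e, N.coeff (j:ℕ) = y j := by
        intro j
        rw [hNdef, Polynomial.finset_sum_coeff]
        rw [Finset.sum_eq_single j]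
        · rw [Polynomial.coeff_C_mul, Polynomial.coeff_X_pow, if_pos rfl, mul_one]
        · intro i _ hij
          rw [Polynomial.coeff_C_mul, Polynomial.coeff_X_pow,
            if_neg (fun h => hij (Fin.ext h.symm)), mul_zero]
        · intro h
          exact absurd (Finset.mem_univ j) h
      have hN0 : N ≠ 0 := by
        obtain ⟨j₀, hj₀⟩ := Function.ne_iff.mp hy0
        intro h
        apply hj₀
        rw [← hNcoeff j₀, h, Polynomial.coeff_zero]
        rfl
      have hNdeg : N.natDegree ≤ e - 1 := by
        rw [hNdef]
        refine Polynomial.natDegree_sum_le_of_forall_le _ _ ?_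
        intro j _
        refine le_trans (Polynomial.natDegree_C_mul_le _ _) ?_
        rw [Polynomial.natDegree_X_pow]
        omega
      have hsum0 : (∑ j : Fin e, C (y j)
          * Polynomial.map (Polynomial.evalRingHom v₀) (r j)) = 0 := by
        ext n
        rw [Polynomial.finset_sum_coeff, Polynomial.coeff_zero]
        by_cases hn : n < e
        · have := congrFun hmv ⟨n, hn⟩
          simp only [Matrix.mulVec, dotProduct, Pi.zero_apply,
            RingHom.mapMatrix_apply, Matrix.map_apply, hM, Matrix.of_apply] at this
          rw [← this]
          refine Finset.sum_congr rfl ?_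
          intro j _
          rw [Polynomial.coeff_C_mul, Polynomial.coeff_map]
          simp only [Polynomial.coe_evalRingHom]
          ring
        · refine Finset.sum_eq_zero ?_
          intro j _
          rw [Polynomial.coeff_C_mul, Polynomial.coeff_map]
          have hrz : (r j).coeff n = 0 :=
            Polynomial.coeff_eq_zero_of_natDegree_lt
              (lt_of_lt_of_le (hRED j).2.1 (by omega))
          rw [hrz]
          simp
      have hfac : Polynomial.map (Polynomial.evalRingHom v₀) η * N
          = (∑ j : Fin e, C (y j) * Polynomial.map (Polynomial.evalRingHom v₀) (q j))
            * X^e := by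
        have hmA : Polynomial.map (Polynomial.evalRingHom v₀) A = X^e := by
          rw [hmapA, hPv₀, map_zero, sub_zero]
        calc Polynomial.map (Polynomial.evalRingHom v₀) η * N
            = ∑ j : Fin e, C (y j)
              * (Polynomial.map (Polynomial.evalRingHom v₀) η * X^(j:ℕ)) := by
              rw [hNdef, Finset.mul_sum]
              exact Finset.sum_congr rfl (fun j _ => by ring)
          _ = ∑ j : Fin e, C (y j)
              * (Polynomial.map (Polynomial.evalRingHom v₀) (q j) * X^e
                + Polynomial.map (Polynomial.evalRingHom v₀) (r j)) := by
              refine Finset.sum_congr rfl (fun j _ => ?_)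
              rw [hmapRED v₀ j, hmA]
          _ = (∑ j : Fin e, C (y j)
                * Polynomial.map (Polynomial.evalRingHom v₀) (q j)) * X^e
              + ∑ j : Fin e, C (y j)
                * Polynomial.map (Polynomial.evalRingHom v₀) (r j) := by
              rw [Finset.sum_mul, ← Finset.sum_add_distrib]
              exact Finset.sum_congr rfl (fun j _ => by ring)
          _ = _ := by rw [hsum0, add_zero]
      have hXnd : ¬ (X : K[X]) ∣ Polynomial.map (Polynomial.evalRingHom v₀) η := by
        rw [Polynomial.X_dvd_iff, hmapη v₀]
        have hTv : T.eval v₀ = Q.eval v₀ := by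
          rw [hT, Polynomial.eval_sub, hPv₀, sub_zero]
        have hcf : ((X + C a)^e - X^e - C (T.eval v₀)).coeff 0
            = a^e - Q.eval v₀ := by
          rw [Polynomial.coeff_sub, Polynomial.coeff_sub,
            Polynomial.coeff_X_add_C_pow, Polynomial.coeff_X_pow,
            Polynomial.coeff_C_zero, hTv,
            if_neg (fun h => he0 h.symm)]
          simp
        rw [hcf]
        exact sub_ne_zero_of_ne (Ne.symm hQv₀)
      have hXeN : (X : K[X])^e ∣ N := by
        refine Prime.pow_dvd_of_dvd_mul_left Polynomial.prime_X e hXnd ?_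
        exact ⟨∑ j : Fin e, C (y j) * Polynomial.map (Polynomial.evalRingHom v₀) (q j),
          by rw [hfac]; ring⟩
      have := Polynomial.natDegree_le_of_dvd hXeN hN0
      rw [Polynomial.natDegree_X_pow] at this
      omega
    intro hMdet
    apply hdetv
    rw [← RingHom.map_det]
    rw [hMdet]
    simp
  · -- degree bound
    rw [Matrix.det_apply]
    refine Polynomial.natDegree_sum_le_of_forall_le _ _ ?_
    intro σ _
    have hprod : (∏ i : Fin e, M (σ i) i).natDegree ≤ e^2 := by
      refine le_trans (Polynomial.natDegree_prod_le _ _) ?_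
      calc (∑ i : Fin e, (M (σ i) i).natDegree) ≤ ∑ _i : Fin e, e := by
            refine Finset.sum_le_sum ?_
            intro i _
            exact (hRED i).2.2 _
        _ = e^2 := by simp [pow_two, mul_comm]
    rcases Int.units_eq_one_or (Equiv.Perm.sign σ) with hs | hs
    · simpa [hs] using hprod
    · simpa [hs] using hprod
  · -- vanishing at solutions
    intro u v h1 h2
    have hP0 : P.eval v = u ^ e := hPeval u v h1
    have hQ0 : Q.eval v = (u + a) ^ e := hQeval u v h2
    have hdet : Polynomial.eval v M.det
        = ((Polynomial.evalRingHom v).mapMatrix M).det := by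
      exact RingHom.map_det (Polynomial.evalRingHom v) M
    rw [hdet]
    rw [← Matrix.exists_vecMul_eq_zero_iff]
    refine ⟨fun i => u ^ (i:ℕ), ?_, ?_⟩
    · intro hcon
      have := congrFun hcon ⟨0, hepos⟩
      simp at this
    · funext j
      have hdeg : (Polynomial.map (Polynomial.evalRingHom v) (r j)).natDegree < e :=
        lt_of_le_of_lt Polynomial.natDegree_map_le (hRED j).2.1
      have heval : Polynomial.eval u (Polynomial.map (Polynomial.evalRingHom v) (r j))
          = ∑ i : Fin e, u ^ (i:ℕ) * ((Polynomial.evalRingHom v).mapMatrix M) i j := by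
        rw [Polynomial.eval_eq_sum_range' hdeg]
        rw [Finset.sum_range fun i => (Polynomial.map (Polynomial.evalRingHom v) (r j)).coeff i * u ^ i]
        refine Finset.sum_congr rfl ?_
        intro i _
        rw [Polynomial.coeff_map]
        simp only [RingHom.mapMatrix_apply, Matrix.map_apply, hM, Matrix.of_apply]
        ring
      have hz : Polynomial.eval u (Polynomial.map (Polynomial.evalRingHom v) (r j)) = 0 := by
        have := hmapRED v j
        have hr' : Polynomial.map (Polynomial.evalRingHom v) (r j)
            = Polynomial.map (Polynomial.evalRingHom v) η * X ^ (j:ℕ)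
              - Polynomial.map (Polynomial.evalRingHom v) (q j)
                * Polynomial.map (Polynomial.evalRingHom v) A := by
          rw [this]; ring
        rw [hr', Polynomial.eval_sub, Polynomial.eval_mul, Polynomial.eval_mul,
          hmapη, hmapA]
        simp only [Polynomial.eval_sub, Polynomial.eval_pow, Polynomial.eval_add,
          Polynomial.eval_X, Polynomial.eval_C]
        rw [hP0, hT]
        rw [Polynomial.eval_sub, hP0, hQ0]
        ring
      simp only [Matrix.vecMul, dotProduct, Pi.zero_apply]
      rw [← heval, hz]


lemma core_easy (F : Type*) [Field F] [Fintype F] [DecidableEq F] (e : ℕ)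
    (heinj : Function.Injective fun x : F => x ^ e)
    (c a b α β α' β' : F) (hβ : β ≠ 0) :
    (Finset.univ.filter (fun uv : F × F =>
      uv.1 ^ e * β - c * (uv.2 ^ e * α) = b ∧
      c * ((uv.1 + a) ^ e * β') - (uv.2 + a) ^ e * α' = c * b)).card
      ≤ Fintype.card F := by
  rw [← Finset.card_univ (α := F)]
  refine Finset.card_le_card_of_injOn (fun uv : F × F => uv.2) (fun _ _ => Finset.mem_univ _) ?_
  intro uv1 h1 uv2 h2 hv
  simp only [Finset.mem_coe, Finset.mem_filter] at h1 h2
  simp only at hv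
  have e1 := h1.2.1
  have e2 := h2.2.1
  have hu : uv1.1 = uv2.1 := by
    apply heinj
    have : uv1.1 ^ e * β = uv2.1 ^ e * β := by
      rw [sub_eq_iff_eq_add] at e1 e2
      rw [e1, e2, hv]
    simpa using mul_right_cancel₀ hβ this
  exact Prod.ext hu hv

lemma core_hard (F : Type*) [Field F] [Fintype F] [DecidableEq F] (e : ℕ) (he2 : 2 ≤ e)
    (heinj : Function.Injective fun x : F => x ^ e)
    (heF : (e : F) ≠ 0)
    (c a b α β α' β' : F) (hc : c ≠ 0) (ha : a ≠ 0) (hb : b ≠ 0)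
    (hα : α ≠ 0) (hβ : β ≠ 0) (hα' : α' ≠ 0) (hβ' : β' ≠ 0) :
    (Finset.univ.filter (fun uv : F × F =>
      uv.1 ^ e * β - c * (uv.2 ^ e * α) = b ∧
      c * ((uv.1 + a) ^ e * β') - (uv.2 + a) ^ e * α' = c * b)).card
      ≤ e ^ 2 := by
  classical
  set L := AlgebraicClosure F
  set φ : F →+* L := algebraMap F L with hφ
  have hφinj : Function.Injective φ := φ.injective
  have hne : ∀ x : F, x ≠ 0 → φ x ≠ 0 := fun x hx h =>
    hx (hφinj (by rw [h, map_zero]))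
  have heK : ((e : ℕ) : L) ≠ 0 := by
    have : ((e : ℕ) : L) = φ (e : F) := by
      rw [map_natCast]
    rw [this]
    exact hne _ heF
  obtain ⟨D, hD0, hDdeg, hDvan⟩ := core_poly e he2 heK
    (φ c) (φ a) (φ b) (φ α) (φ β) (φ α') (φ β')
    (hne c hc) (hne a ha) (hne b hb) (hne α hα) (hne β hβ) (hne α' hα') (hne β' hβ')
  calc (Finset.univ.filter (fun uv : F × F =>
      uv.1 ^ e * β - c * (uv.2 ^ e * α) = b ∧
      c * ((uv.1 + a) ^ e * β') - (uv.2 + a) ^ e * α' = c * b)).card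
      ≤ D.roots.toFinset.card := by
        refine Finset.card_le_card_of_injOn (fun uv : F × F => φ uv.2) ?_ ?_
        · intro uv huv
          simp only [Finset.mem_coe, Finset.mem_filter] at huv ⊢
          rw [Multiset.mem_toFinset, Polynomial.mem_roots hD0]
          refine hDvan (φ uv.1) (φ uv.2) ?_ ?_
          · have := congrArg φ huv.2.1
            push_cast [map_sub, map_mul, map_pow] at this
            exact this
          · have := congrArg φ huv.2.2
            push_cast [map_sub, map_mul, map_pow, map_add] at this
            exact this
        · intro uv1 h1 uv2 h2 hv
          simp only [Finset.mem_coe, Finset.mem_filter] at h1 h2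
          simp only at hv
          have hv2 : uv1.2 = uv2.2 := hφinj hv
          have e1 := h1.2.1
          have e2 := h2.2.1
          have hu : uv1.1 = uv2.1 := by
            apply heinj
            have : uv1.1 ^ e * β = uv2.1 ^ e * β := by
              rw [sub_eq_iff_eq_add] at e1 e2
              rw [e1, e2, hv2]
            simpa using mul_right_cancel₀ hβ this
          exact Prod.ext hu hv2
    _ ≤ Multiset.card D.roots := Multiset.toFinset_card_le _
    _ ≤ D.natDegree := Polynomial.card_roots' D
    _ ≤ e ^ 2 := hDdeg




lemma aux_count (F : Type*) [Field F] [Fintype F] [DecidableEq F] (c : F) (hc : c ≠ 0)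
    (d : ℕ) :
    ∀ (m : ℕ) (ds : Fin m → ℕ),
    (∀ i, Nat.gcd (ds i) (Fintype.card F - 1) = 1) →
    (∀ i, 1 < ds i) → (∀ i, ds i ≤ d) →
    (∀ i, ((ds i : F) ≠ 0)) →
    ∀ (g : Fin m → (Fin m → F) → F),
    (∀ i, ∀ x y : Fin m → F, (∀ j, i < j → x j = y j) → g i x = g i y) →
    (∀ i x, g i x ≠ 0) →
    ∀ (a b : Fin m → F),
    (Finset.univ.filter (fun zx : (Fin m → F) × (Fin m → F) =>
        (∀ i, zx.1 i ^ ds i * g i zx.1 - c * (zx.2 i ^ ds i * g i zx.2) = b i) ∧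
        (∀ i, c * ((zx.1 i + a i) ^ ds i * g i (zx.1 + a))
          - (zx.2 i + a i) ^ ds i * g i (zx.2 + a) = c * b i))).card
      ≤ Fintype.card F ^ (m - (univ.filter fun i => a i * b i ≠ 0).card)
        * d ^ (2 * (univ.filter fun i => a i * b i ≠ 0).card) := by
  intro m
  induction m with
  | zero =>
    intro ds _ _ _ _ g _ _ a b
    refine le_trans (Finset.card_filter_le _ _) ?_
    rw [Finset.card_univ]
    simp
  | succ m IH =>
    intro ds hgcd hds1 hdsd hpds g hgdep hgne a b
    -- primed data
    set ds' : Fin m → ℕ := ds ∘ Fin.succ with hds'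
    set g' : Fin m → (Fin m → F) → F := fun i y => g i.succ (Fin.cons 0 y) with hg'
    set a' : Fin m → F := a ∘ Fin.succ with ha'
    set b' : Fin m → F := b ∘ Fin.succ with hb'
    have tail_eq : ∀ (i : Fin m) (z : Fin (m+1) → F), g i.succ z = g' i (z ∘ Fin.succ) := by
      intro i z
      rw [hg']
      refine hgdep i.succ z (Fin.cons 0 (z ∘ Fin.succ)) ?_
      intro j
      refine Fin.cases ?_ ?_ j
      · intro h; exact absurd h (by simp [Fin.lt_def])
      · intro k _
        rw [Fin.cons_succ]
        rfl
    have hg'dep : ∀ i, ∀ x y : Fin m → F, (∀ j, i < j → x j = y j) → g' i x = g' i y := by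
      intro i x y hxy
      rw [hg']
      refine hgdep i.succ _ _ ?_
      intro j
      refine Fin.cases ?_ ?_ j
      · intro h; exact absurd h (by simp [Fin.lt_def])
      · intro k hk
        rw [Fin.cons_succ, Fin.cons_succ]
        refine hxy k ?_
        exact Fin.succ_lt_succ_iff.mp hk
    have hg'ne : ∀ i x, g' i x ≠ 0 := fun i x => hgne i.succ _
    -- the two filter sets
    set S := (Finset.univ.filter (fun zx : (Fin (m+1) → F) × (Fin (m+1) → F) =>
        (∀ i, zx.1 i ^ ds i * g i zx.1 - c * (zx.2 i ^ ds i * g i zx.2) = b i) ∧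
        (∀ i, c * ((zx.1 i + a i) ^ ds i * g i (zx.1 + a))
          - (zx.2 i + a i) ^ ds i * g i (zx.2 + a) = c * b i))) with hS
    set S' := (Finset.univ.filter (fun zx : (Fin m → F) × (Fin m → F) =>
        (∀ i, zx.1 i ^ ds' i * g' i zx.1 - c * (zx.2 i ^ ds' i * g' i zx.2) = b' i) ∧
        (∀ i, c * ((zx.1 i + a' i) ^ ds' i * g' i (zx.1 + a'))
          - (zx.2 i + a' i) ^ ds' i * g' i (zx.2 + a') = c * b' i))) with hS'
    set ρ : (Fin (m+1) → F) × (Fin (m+1) → F) → (Fin m → F) × (Fin m → F) :=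
      fun zx => (zx.1 ∘ Fin.succ, zx.2 ∘ Fin.succ) with hρ
    have hshift : ∀ (z : Fin (m+1) → F), (z + a) ∘ Fin.succ = z ∘ Fin.succ + a' := by
      intro z; funext i; simp [ha']
    have himg : ∀ zx ∈ S, ρ zx ∈ S' := by
      intro zx hzx
      rw [hS, Finset.mem_filter] at hzx
      obtain ⟨-, h1, h2⟩ := hzx
      rw [hS', Finset.mem_filter]
      refine ⟨Finset.mem_univ _, ?_, ?_⟩
      · intro i
        have := h1 i.succ
        rw [tail_eq i zx.1, tail_eq i zx.2] at this
        exact this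
      · intro i
        have := h2 i.succ
        rw [tail_eq i (zx.1 + a), tail_eq i (zx.2 + a), hshift, hshift] at this
        exact this
    set κ : ℕ := if a 0 * b 0 = 0 then Fintype.card F else d^2 with hκ
    have hfib : ∀ s' ∈ S.image ρ, (S.filter (fun zx => ρ zx = s')).card ≤ κ := by
      intro s' _
      set e := ds 0 with he
      have heinj : Function.Injective (fun x : F => x ^ e) :=
        pow_inj_of_gcd F e (by have := hds1 0; omega) (hgcd 0)
      set β := g 0 (Fin.cons 0 s'.1) with hβ
      set α := g 0 (Fin.cons 0 s'.2) with hα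
      set β2 := g 0 (Fin.cons 0 (s'.1 + a')) with hβ2
      set α2 := g 0 (Fin.cons 0 (s'.2 + a')) with hα2
      have hcard : (S.filter (fun zx => ρ zx = s')).card
          ≤ (Finset.univ.filter (fun uv : F × F =>
              uv.1 ^ e * β - c * (uv.2 ^ e * α) = b 0 ∧
              c * ((uv.1 + a 0) ^ e * β2) - (uv.2 + a 0) ^ e * α2 = c * b 0)).card := by
        refine Finset.card_le_card_of_injOn (fun zx => (zx.1 0, zx.2 0)) ?_ ?_
        · intro zx hzx
          rw [Finset.mem_coe, Finset.mem_filter] at hzx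
          obtain ⟨hzxS, hρ'⟩ := hzx
          rw [hS, Finset.mem_filter] at hzxS
          obtain ⟨-, h1, h2⟩ := hzxS
          rw [Finset.mem_coe, Finset.mem_filter]
          refine ⟨Finset.mem_univ _, ?_, ?_⟩
          · have := h1 0
            have hgz : g 0 zx.1 = β := by
              rw [hβ, ← hρ']
              refine hgdep 0 _ _ ?_
              intro j
              refine Fin.cases ?_ ?_ j
              · intro h; exact absurd h (lt_irrefl _)
              · intro k _; rw [Fin.cons_succ]; rfl
            have hgx : g 0 zx.2 = α := by
              rw [hα, ← hρ']
              refine hgdep 0 _ _ ?_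
              intro j
              refine Fin.cases ?_ ?_ j
              · intro h; exact absurd h (lt_irrefl _)
              · intro k _; rw [Fin.cons_succ]; rfl
            rw [hgz, hgx] at this
            exact this
          · have := h2 0
            have hgz : g 0 (zx.1 + a) = β2 := by
              rw [hβ2, ← hρ']
              refine hgdep 0 _ _ ?_
              intro j
              refine Fin.cases ?_ ?_ j
              · intro h; exact absurd h (lt_irrefl _)
              · intro k _; rw [Fin.cons_succ]; simp [hρ, ha']
            have hgx : g 0 (zx.2 + a) = α2 := by
              rw [hα2, ← hρ']
              refine hgdep 0 _ _ ?_
              intro j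
              refine Fin.cases ?_ ?_ j
              · intro h; exact absurd h (lt_irrefl _)
              · intro k _; rw [Fin.cons_succ]; simp [hρ, ha']
            rw [hgz, hgx] at this
            simpa using this
        · intro zx1 h1 zx2 h2 heq
          simp only [Finset.mem_coe, Finset.mem_filter] at h1 h2
          simp only [Prod.mk.injEq] at heq
          have ht1 : zx1.1 ∘ Fin.succ = zx2.1 ∘ Fin.succ := by
            have := h1.2.trans h2.2.symm
            exact congrArg Prod.fst this
          have ht2 : zx1.2 ∘ Fin.succ = zx2.2 ∘ Fin.succ := by
            have := h1.2.trans h2.2.symm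
            exact congrArg Prod.snd this
          have hz : zx1.1 = zx2.1 := by
            funext j
            refine Fin.cases ?_ ?_ j
            · exact heq.1
            · intro k; exact congrFun ht1 k
          have hx : zx1.2 = zx2.2 := by
            funext j
            refine Fin.cases ?_ ?_ j
            · exact heq.2
            · intro k; exact congrFun ht2 k
          exact Prod.ext hz hx
      refine le_trans hcard ?_
      rw [hκ]
      by_cases h0 : a 0 * b 0 = 0
      · rw [if_pos h0]
        exact core_easy F e heinj c (a 0) (b 0) α β α2 β2 (hgne 0 _)
      · rw [if_neg h0]
        have ha0 : a 0 ≠ 0 := fun h => h0 (by rw [h, zero_mul])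
        have hb0 : b 0 ≠ 0 := fun h => h0 (by rw [h, mul_zero])
        calc _ ≤ e ^ 2 := core_hard F e (hds1 0) heinj (hpds 0) c (a 0) (b 0)
              α β α2 β2 hc ha0 hb0 (hgne 0 _) (hgne 0 _) (hgne 0 _) (hgne 0 _)
          _ ≤ d ^ 2 := Nat.pow_le_pow_left (hdsd 0) 2
    -- put it together
    have hmain : S.card ≤ κ * S'.card := by
      calc S.card ≤ κ * (S.image ρ).card := Finset.card_le_mul_card_image S κ hfib
        _ ≤ κ * S'.card := by
          refine Nat.mul_le_mul_left κ ?_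
          refine Finset.card_le_card ?_
          intro s' hs'
          obtain ⟨zx, hzx, rfl⟩ := Finset.mem_image.mp hs'
          exact himg zx hzx
    have hIH := IH ds' (fun i => hgcd i.succ) (fun i => hds1 i.succ) (fun i => hdsd i.succ)
      (fun i => hpds i.succ) g' hg'dep hg'ne a' b'
    set w' := (univ.filter fun i : Fin m => a' i * b' i ≠ 0).card with hw'
    have hw'le : w' ≤ m := by
      rw [hw']
      exact le_trans (Finset.card_filter_le _ _) (by simp)
    have hwsplit : (univ.filter fun i : Fin (m+1) => a i * b i ≠ 0).card
        = (if a 0 * b 0 ≠ 0 then 1 else 0) + w' := by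
      rw [hw', Finset.card_filter, Finset.card_filter, Fin.sum_univ_succ]
      rfl
    rw [hwsplit]
    by_cases h0 : a 0 * b 0 = 0
    · have hκval : κ = Fintype.card F := by rw [hκ, if_pos h0]
      rw [if_neg (fun h => h h0)]
      calc S.card ≤ κ * S'.card := hmain
        _ = Fintype.card F * S'.card := by rw [hκval]
        _ ≤ Fintype.card F * (Fintype.card F ^ (m - w') * d ^ (2 * w')) :=
            Nat.mul_le_mul_left _ hIH
        _ = Fintype.card F ^ (m + 1 - (0 + w')) * d ^ (2 * (0 + w')) := by
            rw [← mul_assoc, ← pow_succ']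
            congr 2
            · omega
            · omega
    · have hκval : κ = d^2 := by rw [hκ, if_neg h0]
      rw [if_pos h0]
      calc S.card ≤ κ * S'.card := hmain
        _ = d^2 * S'.card := by rw [hκval]
        _ ≤ d^2 * (Fintype.card F ^ (m - w') * d ^ (2 * w')) :=
            Nat.mul_le_mul_left _ hIH
        _ = Fintype.card F ^ (m + 1 - (1 + w')) * d ^ (2 * (1 + w')) := by
            rw [show m + 1 - (1 + w') = m - w' by omega, show 2 * (1 + w') = 2 + 2*w' by ring,
              pow_add]
            ring

theorem stmt17 (F : Type*) [Field F] [Fintype F] [DecidableEq F] (pp n : ℕ) [CharP F pp]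
    (c : F) (hc : c ≠ 0) (d : ℕ)
    (ds : Fin (n + 1) → ℕ)
    (hgcd : ∀ i, Nat.gcd (ds i) (Fintype.card F - 1) = 1)
    (hds1 : ∀ i, 1 < ds i) (hdsd : ∀ i, ds i ≤ d)
    (hpds : ∀ i, ¬ pp ∣ ds i)
    (g : Fin (n + 1) → (Fin (n + 1) → F) → F)
    (hgdep : ∀ i, ∀ x y : Fin (n + 1) → F, (∀ j, i < j → x j = y j) → g i x = g i y)
    (hgne : ∀ i x, g i x ≠ 0)
    (hglast : ∀ x, g (Fin.last n) x = 1)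
    (G : (Fin (n + 1) → F) → Fin (n + 1) → F)
    (hG : ∀ x i, G x i = x i ^ ds i * g i x)
    (a b : Fin (n + 1) → F) :
    Nat.card {zx : (Fin (n + 1) → F) × (Fin (n + 1) → F) //
        (∀ i, G zx.1 i - c * G zx.2 i = b i) ∧
        (∀ i, c * G (zx.1 + a) i - G (zx.2 + a) i = c * b i)}
      ≤ Fintype.card F ^
          ((n + 1) - (Finset.univ.filter fun i : Fin (n + 1) => a i * b i ≠ 0).card)
        * d ^ (2 * (Finset.univ.filter fun i : Fin (n + 1) => a i * b i ≠ 0).card) := by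
  classical
  have hpds' : ∀ i, ((ds i : F) ≠ 0) := by
    intro i h
    exact hpds i ((CharP.cast_eq_zero_iff F pp (ds i)).mp h)
  have key := aux_count F c hc d (n+1) ds hgcd hds1 hdsd hpds' g hgdep hgne a b
  rw [Nat.card_eq_fintype_card, Fintype.card_subtype]
  refine le_trans (le_of_eq ?_) key
  congr 1
  apply Finset.filter_congr
  intro zx _
  simp only [hG, Pi.add_apply]
end
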